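/- arXiv:2601.09517 — 5 statements merged into one kernel-verified Lean document; each statement's English description precedes it below -/
import Mathlib

section
/- For every integer n with |n| > 2, the number n²−4 is positive and not a perfect square, and in the real quadratic field ℚ(√(n²−4)) the two conjugate elements (n+√(n²−4))/2 and (n−√(n²−4))/2 are units of the ring of integers whose sum equals n. In particular, every integer n with |n| > 2 is a sum of two units of the ring of integers of some real quadratic field. -/
/-! The two numbers `(n ± √(n²-4))/2` have sum `n` and product `1`, so both are roots of the
monic integer polynomial `X² - nX + 1`; hence they are algebraic integers, and units since each
is the inverse of the other. Since `(|n| - 1)² < n² - 4 < n²`, the discriminant is not a square. -/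

open NumberField IntermediateField

/-- The real embedding of the ring of integers of a subfield of `ℝ`. -/
noncomputable def emb (L : IntermediateField ℚ ℝ) (x : 𝓞 L) : ℝ := ((x : L) : ℝ)

/-- The real quadratic field `ℚ(√(n²-4))`. -/
noncomputable def Ln (n : ℤ) : IntermediateField ℚ ℝ := ℚ⟮(Real.sqrt ((n : ℝ) ^ 2 - 4))⟯

lemma Int.not_isSquare_sq_sub_four {n : ℤ} (hn : 2 < |n|) : ¬IsSquare (n ^ 2 - 4) := by
  rintro ⟨k, hk⟩
  have hk_lt : |k| < |n| := sq_lt_sq.1 (by nlinarith)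
  have hk_gt : |n| - 1 < |k| := by
    rw [← abs_of_pos (by linarith : 0 < |n| - 1), ← sq_lt_sq]
    nlinarith [sq_abs n]
  omega

lemma isIntegral_of_add_eq_algebraMap_of_mul_eq_one {R A : Type*} [CommRing R] [CommRing A]
    [Algebra R A] {x y : A} {r : R} (hsum : x + y = algebraMap R A r) (hmul : x * y = 1) :
    IsIntegral R x := by
  refine ⟨Polynomial.X ^ 2 - Polynomial.C r * Polynomial.X + 1, by monicity!, ?_⟩
  simp only [Polynomial.eval₂_add, Polynomial.eval₂_sub, Polynomial.eval₂_mul,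
    Polynomial.eval₂_X, Polynomial.eval₂_X_pow, Polynomial.eval₂_C, Polynomial.eval₂_one]
  rw [← hsum, ← hmul]
  ring

lemma NumberField.RingOfIntegers.exists_units_of_add_eq_intCast_of_mul_eq_one {K : Type*}
    [Field K] {x y : K} {n : ℤ} (hsum : x + y = n) (hmul : x * y = 1) :
    ∃ a b : (𝓞 K)ˣ, ((a : 𝓞 K) : K) = x ∧ ((b : 𝓞 K) : K) = y ∧ (a : 𝓞 K) + b = n := by
  have hsum' : x + y = algebraMap ℤ K n := by rwa [eq_intCast]
  let a : 𝓞 K := ⟨x, isIntegral_of_add_eq_algebraMap_of_mul_eq_one hsum' hmul⟩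
  let b : 𝓞 K := ⟨y, isIntegral_of_add_eq_algebraMap_of_mul_eq_one
    (by rwa [add_comm]) (by rwa [mul_comm])⟩
  have hab : a * b = 1 := RingOfIntegers.ext hmul
  refine ⟨.mkOfMulEqOne a b hab, .mkOfMulEqOne b a (by rwa [mul_comm]), rfl, rfl, ?_⟩
  exact RingOfIntegers.ext (by push_cast; exact hsum)

lemma add_div_two_mul_sub_div_two_eq_one {K : Type*} [Field K] [NeZero (2 : K)] {n s : K}
    (hs : s ^ 2 = n ^ 2 - 4) : (n + s) / 2 * ((n - s) / 2) = 1 := by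
  field_simp
  linear_combination -hs

/-- For `|n| > 2`, `n² - 4` is positive and not a square, and `(n ± √(n²-4))/2` are
units of the ring of integers of the real quadratic field `ℚ(√(n²-4))` summing to `n`. -/
theorem int_is_sum_of_two_units_of_some_real_quadratic_field
    (n : ℤ) (hn : 2 < |n|) :
    0 < n ^ 2 - 4 ∧ ¬ IsSquare (n ^ 2 - 4) ∧
      ∃ a b : (𝓞 (Ln n))ˣ,
        emb (Ln n) a = ((n : ℝ) + Real.sqrt ((n : ℝ) ^ 2 - 4)) / 2 ∧
        emb (Ln n) b = ((n : ℝ) - Real.sqrt ((n : ℝ) ^ 2 - 4)) / 2 ∧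
        (a : 𝓞 (Ln n)) + (b : 𝓞 (Ln n)) = (n : 𝓞 (Ln n)) := by
  have hpos : 0 < n ^ 2 - 4 := by nlinarith [sq_abs n]
  refine ⟨hpos, Int.not_isSquare_sq_sub_four hn, ?_⟩
  let s : Ln n := ⟨_, mem_adjoin_simple_self ℚ _⟩
  have hs : s ^ 2 = (n : Ln n) ^ 2 - 4 := Subtype.ext <| by
    push_cast
    exact Real.sq_sqrt (by exact_mod_cast hpos.le)
  obtain ⟨a, b, ha, hb, hab⟩ := RingOfIntegers.exists_units_of_add_eq_intCast_of_mul_eq_one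
    (x := ((n : Ln n) + s) / 2) (y := ((n : Ln n) - s) / 2) (by ring)
    (add_div_two_mul_sub_div_two_eq_one hs)
  refine ⟨a, b, ?_, ?_, hab⟩
  · simp only [emb, ha]; push_cast; rfl
  · simp only [emb, hb]; push_cast; rfl
end

section
/- Let L = ℚ(√d) be a real quadratic field (d ≥ 2 squarefree) and let u_1, u_2 ∈ O_L^× be units with u_1 + u_2 ∈ ℤ. Then one of the following holds: (1) u_2 = u_1' (the Galois conjugate of u_1); (2) u_2 = −u_1; or (3) d = 5 and {u_1, u_2} equals {(3ε_1 + √5)/2, (ε_2 − √5)/2} or {(3ε_1 − √5)/2, (ε_2 + √5)/2} for some signs ε_1, ε_2 ∈ {±1}. -/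
set_option maxHeartbeats 1000000

open NumberField IntermediateField Polynomial

lemma decomp_aux (d : ℕ) (x : ℝ) (hx : x ∈ ℚ⟮(Real.sqrt d)⟯) :
    ∃ a b : ℚ, x = a + b * Real.sqrt d := by
  have hint : IsIntegral ℚ (Real.sqrt d) := by
    refine ⟨X ^ 2 - C (d : ℚ), monic_X_pow_sub_C _ (by norm_num), ?_⟩
    simp [Real.sq_sqrt (by positivity : (0:ℝ) ≤ (d:ℝ))]
  have h1 : x ∈ Algebra.adjoin ℚ {Real.sqrt d} := by
    rw [← adjoin_simple_toSubalgebra_of_isAlgebraic hint.isAlgebraic]; exact hx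
  rw [Algebra.adjoin_singleton_eq_range_aeval] at h1
  obtain ⟨p, hp⟩ := h1
  set q : ℚ[X] := X ^ 2 - C (d : ℚ) with hq
  have hqm : q.Monic := monic_X_pow_sub_C _ (by norm_num)
  have hdeg : (p %ₘ q).degree ≤ 1 := by
    have := degree_modByMonic_lt p hqm
    have hqd : q.degree = 2 := by
      rw [hq]; compute_degree!
    rw [hqd] at this
    exact Order.le_of_lt_succ this
  refine ⟨(p %ₘ q).coeff 0, (p %ₘ q).coeff 1, ?_⟩
  have hmod : (aeval (Real.sqrt d)) p = (aeval (Real.sqrt d)) (p %ₘ q) := by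
    conv_lhs => rw [← modByMonic_add_div p q]
    simp [hq, Real.sq_sqrt (by positivity : (0:ℝ) ≤ (d:ℝ))]
  rw [← hp]; show (aeval (Real.sqrt d)) p = _; rw [hmod]
  conv_lhs => rw [eq_X_add_C_of_degree_le_one hdeg]
  rw [map_add, map_mul, aeval_C, aeval_X, aeval_C]
  rw [eq_ratCast (algebraMap ℚ ℝ), eq_ratCast (algebraMap ℚ ℝ)]
  ring

lemma sq_mul_eq_five (d : ℕ) (hd : 2 ≤ d) (hsf : Squarefree d) (q : ℚ)
    (h : q ^ 2 * d = 5) : d = 5 ∧ (q = 1 ∨ q = -1) := by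
  set p : ℤ := q.num with hp
  set e : ℤ := (q.den : ℤ) with he
  have he0 : 0 < e := Int.natCast_pos.mpr q.pos
  have hqe : (p : ℚ) = q * e := by
    rw [hp, he]
    exact_mod_cast (Rat.mul_den_eq_num q).symm
  have hint : p ^ 2 * d = 5 * e ^ 2 := by
    have h2 : ((p : ℚ)) ^ 2 * d = 5 * (e : ℚ) ^ 2 := by
      rw [hqe]; nlinarith [h]
    exact_mod_cast h2
  have hcop : IsCoprime e p := by
    rw [Int.isCoprime_iff_gcd_eq_one, Int.gcd_comm]
    exact_mod_cast q.reduced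
  have hdvd : e ^ 2 ∣ (d : ℤ) := by
    have h5 : p ^ 2 * (d : ℤ) = e ^ 2 * 5 := by linarith [hint]
    exact (IsCoprime.pow (m := 2) (n := 2) hcop).dvd_of_dvd_mul_left ⟨5, h5⟩
  have hsfz : Squarefree (d : ℤ) := Int.squarefree_natCast.mpr hsf
  have he1 : e = 1 := by
    have := hsfz e (by rw [← sq]; exact hdvd)
    rcases Int.isUnit_iff.mp this with h1 | h1 <;> omega
  rw [he1] at hint
  have hp0 : p ≠ 0 := by
    intro h0; rw [h0] at hint; norm_num at hint
  have hdz : 2 ≤ (d : ℤ) := by exact_mod_cast hd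
  have hpcase : p = 1 ∨ p = -1 := by
    have hb1 : p ≤ 1 := by nlinarith [hint, sq_nonneg p]
    have hb2 : -1 ≤ p := by nlinarith [hint, sq_nonneg p]
    omega
  have hp2 : p ^ 2 = 1 := by rcases hpcase with h1 | h1 <;> rw [h1] <;> ring
  have hd5 : (d : ℤ) = 5 := by rw [hp2] at hint; linarith
  have hqp : q = (p : ℚ) := by rw [hqe, he1]; push_cast; ring
  refine ⟨by exact_mod_cast hd5, ?_⟩
  rcases hpcase with h1 | h1 <;> [left; right] <;> rw [hqp, h1] <;> norm_num

/-- Lemma 6: if `u₁, u₂` are units of the ring of integers of a real quadratic field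
`ℚ(√d)` with `u₁ + u₂ ∈ ℤ`, then `u₂ = u₁'`, or `u₂ = -u₁`, or `d = 5` and
`{u₁, u₂}` is one of the exceptional pairs `{(3ε₁ ± √5)/2, (ε₂ ∓ √5)/2}`. -/
theorem unit_pair_with_integral_sum
    (d : ℕ) (hd : 2 ≤ d) (hsf : Squarefree d)
    (L : IntermediateField ℚ ℝ) (hL : L = ℚ⟮(Real.sqrt d)⟯)
    (σ : L ≃ₐ[ℚ] L) (hσ : σ ≠ AlgEquiv.refl)
    (u₁ u₂ : (𝓞 L)ˣ) (hsum : ∃ m : ℤ, ((u₁ : 𝓞 L) : L) + ((u₂ : 𝓞 L) : L) = (m : L)) :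
    ((u₂ : 𝓞 L) : L) = σ ((u₁ : 𝓞 L) : L) ∨
    ((u₂ : 𝓞 L) : L) = -((u₁ : 𝓞 L) : L) ∨
    (d = 5 ∧ ∃ ε₁ ε₂ : ℝ, (ε₁ = 1 ∨ ε₁ = -1) ∧ (ε₂ = 1 ∨ ε₂ = -1) ∧
      (({emb L u₁, emb L u₂} : Set ℝ)
          = {(3 * ε₁ + Real.sqrt 5) / 2, (ε₂ - Real.sqrt 5) / 2} ∨
        ({emb L u₁, emb L u₂} : Set ℝ)
          = {(3 * ε₁ - Real.sqrt 5) / 2, (ε₂ + Real.sqrt 5) / 2})) := by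
  obtain ⟨m, hm⟩ := hsum
  have hd0 : (0:ℝ) ≤ (d:ℝ) := by positivity
  have hgmem : Real.sqrt d ∈ L := by rw [hL]; exact mem_adjoin_simple_self ℚ _
  set g : L := ⟨Real.sqrt d, hgmem⟩ with hgdef
  have hgr : (g : ℝ) = Real.sqrt d := rfl
  have hdec : ∀ x : L, ∃ a b : ℚ, x = (a : L) + (b : L) * g := by
    intro x
    obtain ⟨a, b, hab⟩ := decomp_aux d x (by rw [← hL]; exact x.2)
    refine ⟨a, b, Subtype.ext ?_⟩
    push_cast
    exact hab
  have hg2 : g * g = ((d : ℕ) : L) := by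
    apply Subtype.ext
    push_cast [hgr]
    exact Real.mul_self_sqrt hd0
  have hσg : σ g = -g := by
    have h1 : σ g * σ g = g * g := by
      rw [← map_mul, hg2, map_natCast]
    have h2 : (σ g - g) * (σ g + g) = 0 := by linear_combination h1
    rcases mul_eq_zero.mp h2 with h | h
    · exfalso; apply hσ
      apply AlgEquiv.ext
      intro x
      obtain ⟨a', b', hab⟩ := hdec x
      have hgg : σ g = g := by linear_combination h
      rw [hab]
      simp [map_add, map_mul, map_ratCast, hgg]
    · linear_combination h
  have key : ∀ y : 𝓞 L, ∃ a b : ℚ, ∃ t n : ℤ,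
      (t : ℚ) = 2 * a ∧ (n : ℚ) = a ^ 2 - b ^ 2 * d ∧
      (y : L) = (a : L) + (b : L) * g ∧ σ (y : L) = (a : L) - (b : L) * g ∧
      (y : L) + σ (y : L) = (t : L) ∧ (y : L) * σ (y : L) = (n : L) := by
    intro y
    obtain ⟨a, b, hab⟩ := hdec (y : L)
    have hσy : σ (y : L) = (a : L) - (b : L) * g := by
      rw [hab, map_add, map_mul, map_ratCast, map_ratCast, hσg]; ring
    have hsum2 : (y : L) + σ (y : L) = (((2 * a : ℚ)) : L) := by
      rw [hσy, hab]; push_cast; ring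
    have hprod : (y : L) * σ (y : L) = (((a ^ 2 - b ^ 2 * d : ℚ)) : L) := by
      rw [hσy, hab]; push_cast
      linear_combination (-((b : L)) ^ 2) * hg2
    have hyint : IsIntegral ℤ (y : L) := y.2
    have hσint : IsIntegral ℤ (σ (y : L)) := hyint.map (σ.toAlgHom.restrictScalars ℤ)
    have hti : IsIntegral ℤ (2 * a : ℚ) := by
      have h3 := hyint.add hσint
      rw [hsum2, show (((2 * a : ℚ)) : L) = algebraMap ℚ L (2 * a) by norm_num] at h3
      rwa [isIntegral_algebraMap_iff (algebraMap ℚ L).injective] at h3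
    have hni : IsIntegral ℤ (a ^ 2 - b ^ 2 * d : ℚ) := by
      have h3 := hyint.mul hσint
      rw [hprod, show (((a ^ 2 - b ^ 2 * (d:ℚ) : ℚ)) : L) = algebraMap ℚ L (a ^ 2 - b ^ 2 * (d:ℚ)) by norm_num] at h3
      rwa [isIntegral_algebraMap_iff (algebraMap ℚ L).injective] at h3
    obtain ⟨t, ht⟩ := IsIntegrallyClosed.isIntegral_iff.mp hti
    obtain ⟨n, hn⟩ := IsIntegrallyClosed.isIntegral_iff.mp hni
    rw [eq_intCast] at ht hn
    refine ⟨a, b, t, n, ht, hn, hab, hσy, ?_, ?_⟩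
    · rw [hsum2, ← ht]; push_cast; ring
    · rw [hprod, ← hn]; push_cast; ring
  -- norms of units are ±1
  have hnormu : ∀ (u : (𝓞 L)ˣ) (k : ℤ), ((u : 𝓞 L) : L) * σ ((u : 𝓞 L) : L) = (k : L) →
      k = 1 ∨ k = -1 := by
    intro u k hk
    obtain ⟨a', b', t', n', _, _, _, _, _, hk'⟩ := key ((u⁻¹ : (𝓞 L)ˣ) : 𝓞 L)
    have hvw : ((u : 𝓞 L) : L) * (((u⁻¹ : (𝓞 L)ˣ) : 𝓞 L) : L) = 1 := by
      have h1 : ((u : 𝓞 L) * ((u⁻¹ : (𝓞 L)ˣ) : 𝓞 L) : 𝓞 L) = 1 := u.mul_inv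
      exact_mod_cast congrArg (fun z : 𝓞 L => (z : L)) h1
    have hmul : ((k * n' : ℤ) : L) = 1 := by
      push_cast
      rw [← hk, ← hk']
      calc ((u : 𝓞 L) : L) * σ ((u : 𝓞 L) : L) *
            ((((u⁻¹ : (𝓞 L)ˣ) : 𝓞 L) : L) * σ (((u⁻¹ : (𝓞 L)ˣ) : 𝓞 L) : L))
          = (((u : 𝓞 L) : L) * (((u⁻¹ : (𝓞 L)ˣ) : 𝓞 L) : L)) *
            σ (((u : 𝓞 L) : L) * (((u⁻¹ : (𝓞 L)ˣ) : 𝓞 L) : L)) := by rw [map_mul]; ring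
        _ = 1 := by rw [hvw, map_one, mul_one]
    have hk1 : k * n' = 1 := by exact_mod_cast hmul
    exact Int.isUnit_iff.mp (IsUnit.of_mul_eq_one _ hk1)
  obtain ⟨a, b, t, n, ht, hn, hv₁, hσv₁, htr, hnv⟩ := key ((u₁ : (𝓞 L)ˣ) : 𝓞 L)
  obtain ⟨a₂, b₂, t₂, n₂, _, _, _, _, _, hnv₂⟩ := key ((u₂ : (𝓞 L)ˣ) : 𝓞 L)
  have hn1 : n = 1 ∨ n = -1 := hnormu u₁ n hnv
  have hn2 : n₂ = 1 ∨ n₂ = -1 := hnormu u₂ n₂ hnv₂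
  have hv₂ : ((u₂ : 𝓞 L) : L) = (m : L) - ((u₁ : 𝓞 L) : L) := by
    linear_combination hm
  have hσv₂ : σ ((u₂ : 𝓞 L) : L) = (m : L) - σ ((u₁ : 𝓞 L) : L) := by
    rw [hv₂, map_sub, map_intCast]
  have hkey : m ^ 2 - m * t + n = n₂ := by
    have h4 : ((m ^ 2 - m * t + n : ℤ) : L) = ((n₂ : ℤ) : L) := by
      push_cast
      rw [← hnv₂, hσv₂, hv₂]
      linear_combination ((m : L)) * htr - hnv
    exact_mod_cast h4
  by_cases hm0 : m = 0
  · right; left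
    rw [hv₂, hm0]; push_cast; ring
  by_cases hmt : m = t
  · left
    rw [hv₂, hmt, ← htr]; ring
  -- exceptional case
  right; right
  have hc : m * (m - t) = n₂ - n := by linear_combination hkey
  have hex : (m * (m - t) = 2 ∧ n = -1) ∨ (m * (m - t) = -2 ∧ n = 1) := by
    rcases hn1 with h1 | h1 <;> rcases hn2 with h2 | h2 <;> rw [h1, h2] at hc
    · exfalso
      rcases mul_eq_zero.mp (by omega : m * (m - t) = 0) with h | h
      · exact hm0 h
      · exact hmt (by omega)
    · right; exact ⟨by omega, h1⟩
    · left; exact ⟨by omega, h1⟩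
    · exfalso
      rcases mul_eq_zero.mp (by omega : m * (m - t) = 0) with h | h
      · exact hm0 h
      · exact hmt (by omega)
  have hmle : m ≤ 2 := by
    rcases hex with ⟨h2, _⟩ | ⟨h2, _⟩
    · exact Int.le_of_dvd (by norm_num) ⟨m - t, h2.symm⟩
    · have : m ∣ 2 := (dvd_neg).mp ⟨m - t, by omega⟩
      exact Int.le_of_dvd (by norm_num) this
  have hmge : -2 ≤ m := by
    have hmd : m ∣ 2 := by
      rcases hex with ⟨h2, _⟩ | ⟨h2, _⟩
      · exact ⟨m - t, h2.symm⟩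
      · exact (dvd_neg).mp ⟨m - t, by omega⟩
    have : -m ∣ 2 := (neg_dvd).mpr hmd
    have := Int.le_of_dvd (by norm_num) this
    omega
  -- common facts
  have h54 : t ^ 2 - 4 * n = 5 ∧
      ((n = -1 ∧ (t = 1 ∨ t = -1) ∧ (2 * m - t = 3 ∨ 2 * m - t = -3)) ∨
       (n = 1 ∧ (t = 3 ∨ t = -3) ∧ (2 * m - t = 1 ∨ 2 * m - t = -1))) := by
    rcases hex with ⟨h2, hnn⟩ | ⟨h2, hnn⟩ <;> subst hnn
    · have hts : (t = 1 ∨ t = -1) ∧ (2 * m - t = 3 ∨ 2 * m - t = -3) := by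
        interval_cases m <;> omega
      refine ⟨?_, Or.inl ⟨rfl, hts⟩⟩
      rcases hts.1 with h | h <;> rw [h] <;> ring
    · have hts : (t = 3 ∨ t = -3) ∧ (2 * m - t = 1 ∨ 2 * m - t = -1) := by
        interval_cases m <;> omega
      refine ⟨?_, Or.inr ⟨rfl, hts⟩⟩
      rcases hts.1 with h | h <;> rw [h] <;> ring
  have h5q : (t : ℚ) ^ 2 - 4 * n = 5 := by exact_mod_cast h54.1
  have hq5 : (2 * b) ^ 2 * (d : ℚ) = 5 := by
    linear_combination h5q - ((t : ℚ) + 2 * a) * ht + 4 * hn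
  obtain ⟨hd5, hb⟩ := sq_mul_eq_five d hd hsf (2 * b) hq5
  refine ⟨hd5, ?_⟩
  -- real computations
  have hsq5 : Real.sqrt (d : ℝ) = Real.sqrt 5 := by rw [hd5]; norm_num
  have hx₁ : emb L (↑u₁) = (a : ℝ) + (b : ℝ) * Real.sqrt 5 := by
    have h6 := congrArg (fun z : L => (z : ℝ)) hv₁
    simp only [emb] at *
    rw [← hsq5]
    push_cast at h6
    simpa [hgr] using h6
  have hx₂ : emb L (↑u₂) = (m : ℝ) - emb L (↑u₁) := by
    have h6 := congrArg (fun z : L => (z : ℝ)) hv₂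
    simp only [emb] at *
    push_cast at h6
    exact h6
  have ha : (a : ℝ) = (t : ℝ) / 2 := by
    have : ((t : ℚ) : ℝ) = ((2 * a : ℚ) : ℝ) := by exact_mod_cast congrArg (fun q : ℚ => (q : ℝ)) ht
    push_cast at this
    linarith
  have hbr : (b : ℝ) = 1 / 2 ∨ (b : ℝ) = -(1 / 2) := by
    rcases hb with h | h <;> [left; right] <;>
      have h7 : ((2 * b : ℚ) : ℝ) = _ := congrArg (fun q : ℚ => (q : ℝ)) h <;>
      push_cast at h7 <;> linarith
  rcases h54.2 with ⟨hnn, ⟨ht1, ht3⟩⟩ | ⟨hnn, ⟨ht1, ht3⟩⟩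
  · -- n = -1 : t = ±1, 2m - t = ±3
    refine ⟨((2 * m - t : ℤ) : ℝ) / 3, (t : ℝ), ?_, ?_, ?_⟩
    · rcases ht3 with h | h <;> rw [h] <;> norm_num
    · rcases ht1 with h | h <;> rw [h] <;> norm_num
    · rcases hbr with hbr | hbr
      · right
        have e1 : emb L (↑u₁) = ((t : ℝ) + Real.sqrt 5) / 2 := by
          rw [hx₁, ha, hbr]; ring
        have e2 : emb L (↑u₂) = (3 * (((2 * m - t : ℤ) : ℝ) / 3) - Real.sqrt 5) / 2 := by
          rw [hx₂, e1]; push_cast; ring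
        rw [e1, e2, Set.pair_comm]
      · left
        have e1 : emb L (↑u₁) = ((t : ℝ) - Real.sqrt 5) / 2 := by
          rw [hx₁, ha, hbr]; ring
        have e2 : emb L (↑u₂) = (3 * (((2 * m - t : ℤ) : ℝ) / 3) + Real.sqrt 5) / 2 := by
          rw [hx₂, e1]; push_cast; ring
        rw [e1, e2, Set.pair_comm]
  · -- n = 1 : t = ±3, 2m - t = ±1
    refine ⟨(t : ℝ) / 3, ((2 * m - t : ℤ) : ℝ), ?_, ?_, ?_⟩
    · rcases ht1 with h | h <;> rw [h] <;> norm_num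
    · rcases ht3 with h | h <;> rw [h] <;> norm_num
    · rcases hbr with hbr | hbr
      · left
        have e1 : emb L (↑u₁) = (3 * ((t : ℝ) / 3) + Real.sqrt 5) / 2 := by
          rw [hx₁, ha, hbr]; ring
        have e2 : emb L (↑u₂) = (((2 * m - t : ℤ) : ℝ) - Real.sqrt 5) / 2 := by
          rw [hx₂, e1]; push_cast; ring
        rw [e1, e2]
      · right
        have e1 : emb L (↑u₁) = (3 * ((t : ℝ) / 3) - Real.sqrt 5) / 2 := by
          rw [hx₁, ha, hbr]; ring
        have e2 : emb L (↑u₂) = (((2 * m - t : ℤ) : ℝ) + Real.sqrt 5) / 2 := by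
          rw [hx₂, e1]; push_cast; ring
        rw [e1, e2]
end

section
/- Let q ≥ 1 be an integer, α ∈ ℂ with |α| > 1, and c = (c_1, …, c_q) ∈ (ℂ∖{0})^q. Then there exists a constant C = C(α, c) > 0, depending only on α and c, such that for all integers n_1 ≥ n_2 ≥ ⋯ ≥ n_q, if the sum c_1 α^{n_1} + ⋯ + c_q α^{n_q} has no vanishing subsum, then |c_1 α^{n_1} + ⋯ + c_q α^{n_q}| > C·|α|^{n_1}. -/
open Finset

lemma exp_sum_lower_bound_aux (q : ℕ) (α : ℂ) (hα : 1 < ‖α‖) (c : Fin q → ℂ) :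
    ∀ k : ℕ, ∃ C : ℝ, 0 < C ∧ ∀ s : Finset (Fin q), ∀ hs : s.Nonempty, s.card ≤ k →
      ∀ n : Fin q → ℤ, (∀ i j : Fin q, i ≤ j → n j ≤ n i) →
      (∀ I ⊆ s, I.Nonempty → ∑ i ∈ I, c i * α ^ (n i) ≠ 0) →
      C * ‖α‖ ^ (n (s.min' hs)) < ‖∑ i ∈ s, c i * α ^ (n i)‖ := by
  classical
  have hαpos : (0 : ℝ) < ‖α‖ := lt_trans one_pos hα
  have hαne : α ≠ 0 := by
    rintro rfl
    rw [norm_zero] at hα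
    exact absurd hα (by norm_num)
  intro k
  induction k with
  | zero =>
    exact ⟨1, one_pos, fun s hs hcard => absurd hcard (by
      have := hs.card_pos; omega)⟩
  | succ k IH =>
    obtain ⟨C, hCpos, hC⟩ := IH
    set M : ℝ := ∑ i, ‖c i‖ with hM
    have hMnn : 0 ≤ M := Finset.sum_nonneg fun i _ => (norm_nonneg _)
    obtain ⟨G, hG⟩ := pow_unbounded_of_one_lt (2 * M / C) hα
    -- the finite collection of bounded exponent patterns
    set A : Finset (Finset (Fin q) × (Fin q → ℤ)) :=
      Finset.univ.powerset ×ˢ Fintype.piFinset (fun _ => Finset.Icc (-(G : ℤ)) 0) with hA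
    have hAne : A.Nonempty := by
      refine ⟨(∅, fun _ => 0), ?_⟩
      simp [hA, Fintype.mem_piFinset]
    set g : (Finset (Fin q) × (Fin q → ℤ)) → ℝ := fun p =>
      if (∑ i ∈ p.1, c i * α ^ (p.2 i)) = 0 then 1
      else ‖∑ i ∈ p.1, c i * α ^ (p.2 i)‖ with hg
    set Cb : ℝ := A.inf' hAne g with hCb
    have hCbpos : 0 < Cb := by
      rw [hCb, Finset.lt_inf'_iff]
      intro p hp
      rw [hg]
      dsimp only
      split_ifs with h
      · exact one_pos
      · exact norm_pos_iff.mpr h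
    refine ⟨min Cb C / 2, by positivity, ?_⟩
    intro s hs hcard n hmono hnvs
    set i₀ : Fin q := s.min' hs with hi₀
    have hi₀s : i₀ ∈ s := Finset.min'_mem s hs
    have hpowpos : (0 : ℝ) < ‖α‖ ^ (n i₀) := zpow_pos hαpos _
    by_cases hcase : ∀ i ∈ s, n i₀ - G ≤ n i
    · -- bounded case
      have hfac : ∑ i ∈ s, c i * α ^ (n i)
          = α ^ (n i₀) * ∑ i ∈ s, c i * α ^ (n i - n i₀) := by
        rw [Finset.mul_sum]
        refine Finset.sum_congr rfl fun i hi => ?_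
        have : α ^ (n i₀) * α ^ (n i - n i₀) = α ^ (n i) := by
          rw [← zpow_add₀ hαne]; congr 1; ring
        rw [mul_left_comm, this]
      set m : Fin q → ℤ := fun i => if i ∈ s then n i - n i₀ else 0 with hm
      have hmemA : (s, m) ∈ A := by
        rw [hA, Finset.mem_product]
        constructor
        · simpa using Finset.subset_univ s
        · rw [Fintype.mem_piFinset]
          intro i
          rw [Finset.mem_Icc, hm]
          dsimp only
          split_ifs with hi
          · have h1 := hcase i hi
            have h2 : n i ≤ n i₀ := hmono i₀ i (Finset.min'_le s i hi)
            omega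
          · omega
      have hsum_eq : ∑ i ∈ s, c i * α ^ (m i) = ∑ i ∈ s, c i * α ^ (n i - n i₀) := by
        refine Finset.sum_congr rfl fun i hi => ?_
        rw [hm]; simp [hi]
      have hne0 : ∑ i ∈ s, c i * α ^ (n i - n i₀) ≠ 0 := by
        intro h
        apply hnvs s Finset.Subset.rfl hs
        rw [hfac, h, mul_zero]
      have hle : Cb ≤ ‖∑ i ∈ s, c i * α ^ (n i - n i₀)‖ := by
        have h := Finset.inf'_le g hmemA
        rw [hg] at h
        dsimp only at h
        rw [hsum_eq] at h
        rw [if_neg hne0] at h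
        exact h
      have habs : ‖∑ i ∈ s, c i * α ^ (n i)‖
          = ‖α‖ ^ (n i₀) * ‖∑ i ∈ s, c i * α ^ (n i - n i₀)‖ := by
        rw [hfac, norm_mul, norm_zpow]
      rw [habs]
      calc min Cb C / 2 * ‖α‖ ^ (n i₀)
          < Cb * ‖α‖ ^ (n i₀) := by
            apply mul_lt_mul_of_pos_right _ hpowpos
            have : min Cb C ≤ Cb := min_le_left _ _
            linarith
        _ ≤ ‖α‖ ^ (n i₀) * ‖∑ i ∈ s, c i * α ^ (n i - n i₀)‖ := by
            rw [mul_comm]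
            exact mul_le_mul_of_nonneg_left hle hpowpos.le
    · -- gap case
      push_neg at hcase
      obtain ⟨j, hjs, hj⟩ := hcase
      set H : Finset (Fin q) := s.filter (fun i => n i₀ - G ≤ n i) with hH
      set T : Finset (Fin q) := s.filter (fun i => ¬ (n i₀ - G ≤ n i)) with hT
      have hsplit : ∑ i ∈ H, c i * α ^ (n i) + ∑ i ∈ T, c i * α ^ (n i)
          = ∑ i ∈ s, c i * α ^ (n i) :=
        Finset.sum_filter_add_sum_filter_not s _ _
      have hi₀H : i₀ ∈ H := by
        rw [hH, Finset.mem_filter]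
        exact ⟨hi₀s, by omega⟩
      have hHne : H.Nonempty := ⟨i₀, hi₀H⟩
      have hjH : j ∉ H := by
        rw [hH, Finset.mem_filter]
        push_neg
        intro _
        omega
      have hHsub : H ⊆ s := Finset.filter_subset _ _
      have hcardH : H.card ≤ k := by
        have : H.card < s.card := Finset.card_lt_card
          ((Finset.ssubset_iff_of_subset hHsub).mpr ⟨j, hjs, hjH⟩)
        omega
      have hminH : H.min' hHne = i₀ := by
        refine le_antisymm (Finset.min'_le H i₀ hi₀H) ?_
        exact Finset.le_min' _ _ _ fun y hy => Finset.min'_le s y (hHsub hy)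
      have hhead : C * ‖α‖ ^ (n i₀) < ‖∑ i ∈ H, c i * α ^ (n i)‖ := by
        have := hC H hHne hcardH n hmono
          (fun I hI hIne => hnvs I (hI.trans hHsub) hIne)
        rwa [hminH] at this
      have htail : ‖∑ i ∈ T, c i * α ^ (n i)‖
          ≤ M * ‖α‖ ^ (n i₀ - G) := by
        calc ‖∑ i ∈ T, c i * α ^ (n i)‖
            ≤ ∑ i ∈ T, ‖c i * α ^ (n i)‖ := norm_sum_le _ _
          _ ≤ ∑ i ∈ T, ‖c i‖ * ‖α‖ ^ ((n i₀ : ℤ) - G) := by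
              refine Finset.sum_le_sum fun i hi => ?_
              rw [norm_mul, norm_zpow]
              refine mul_le_mul_of_nonneg_left ?_ (norm_nonneg _)
              refine zpow_le_zpow_right₀ hα.le ?_
              rw [hT, Finset.mem_filter] at hi
              omega
          _ = (∑ i ∈ T, ‖c i‖) * ‖α‖ ^ ((n i₀ : ℤ) - G) := by
              rw [Finset.sum_mul]
          _ ≤ M * ‖α‖ ^ (n i₀ - G) := by
              refine mul_le_mul_of_nonneg_right ?_ (zpow_pos hαpos _).le
              exact Finset.sum_le_sum_of_subset_of_nonneg (Finset.subset_univ T)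
                (fun i _ _ => norm_nonneg _)
      have hkey : M * ‖α‖ ^ ((n i₀ : ℤ) - G) < C / 2 * ‖α‖ ^ (n i₀) := by
        have h1 : ‖α‖ ^ ((n i₀ : ℤ) - G)
            = ‖α‖ ^ (n i₀) / ‖α‖ ^ (G : ℕ) := by
          rw [zpow_sub₀ (ne_of_gt hαpos), zpow_natCast]
        rw [h1]
        have hGpos : (0 : ℝ) < ‖α‖ ^ (G : ℕ) := pow_pos hαpos _
        rw [mul_div_assoc']
        rw [div_lt_iff₀ hGpos]
        have h2 : 2 * M < C * ‖α‖ ^ (G : ℕ) := by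
          rw [div_lt_iff₀ hCpos] at hG
          linarith [hG]
        calc M * ‖α‖ ^ (n i₀)
            < C * ‖α‖ ^ (G : ℕ) / 2 * ‖α‖ ^ (n i₀) := by
              apply mul_lt_mul_of_pos_right _ hpowpos
              linarith
          _ = C / 2 * ‖α‖ ^ (n i₀) * ‖α‖ ^ (G : ℕ) := by ring
      have htri : ‖∑ i ∈ H, c i * α ^ (n i)‖
          - ‖∑ i ∈ T, c i * α ^ (n i)‖
          ≤ ‖∑ i ∈ s, c i * α ^ (n i)‖ := by
        have h := norm_add_le (∑ i ∈ s, c i * α ^ (n i)) (-(∑ i ∈ T, c i * α ^ (n i)))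
        have heq : ∑ i ∈ s, c i * α ^ (n i) + -(∑ i ∈ T, c i * α ^ (n i))
            = ∑ i ∈ H, c i * α ^ (n i) := by rw [← hsplit]; ring
        rw [heq, norm_neg] at h
        linarith
      have hfin : min Cb C / 2 ≤ C / 2 := by
        have : min Cb C ≤ C := min_le_right _ _
        linarith
      calc min Cb C / 2 * ‖α‖ ^ (n i₀)
          ≤ C / 2 * ‖α‖ ^ (n i₀) := mul_le_mul_of_nonneg_right hfin hpowpos.le
        _ = C * ‖α‖ ^ (n i₀) - C / 2 * ‖α‖ ^ (n i₀) := by ring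
        _ < ‖∑ i ∈ H, c i * α ^ (n i)‖
            - ‖∑ i ∈ T, c i * α ^ (n i)‖ := by
            have := htail.trans_lt hkey
            linarith
        _ ≤ ‖∑ i ∈ s, c i * α ^ (n i)‖ := htri

/-- A family of elements of an additive monoid has no vanishing subsum if the sum over
every nonempty (finite) subset of indices is nonzero. -/
def NoVanishingSubsum {ι R : Type*} [AddCommMonoid R] (w : ι → R) : Prop :=
  ∀ I : Finset ι, I.Nonempty → ∑ i ∈ I, w i ≠ 0

/-- Lemma 8: for `α ∈ ℂ` with `|α| > 1` and nonzero coefficients `c₁, …, c_q`, there is a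
constant `C > 0` such that for all integers `n₁ ≥ ⋯ ≥ n_q`, if
`c₁α^{n₁} + ⋯ + c_qα^{n_q}` has no vanishing subsum, then its modulus exceeds `C·|α|^{n₁}`. -/
theorem exp_sum_lower_bound
    (q : ℕ) (hq : 1 ≤ q) (α : ℂ) (hα : 1 < ‖α‖)
    (c : Fin q → ℂ) (hc : ∀ i, c i ≠ 0) :
    ∃ C : ℝ, 0 < C ∧ ∀ n : Fin q → ℤ, (∀ i j : Fin q, i ≤ j → n j ≤ n i) →
      NoVanishingSubsum (fun i => c i * α ^ (n i)) →
      C * ‖α‖ ^ (n ⟨0, hq⟩) < ‖∑ i, c i * α ^ (n i)‖ := by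
  obtain ⟨C, hCpos, hC⟩ := exp_sum_lower_bound_aux q α hα c q
  refine ⟨C, hCpos, ?_⟩
  intro n hmono hnvs
  have hne : (Finset.univ : Finset (Fin q)).Nonempty := ⟨⟨0, hq⟩, Finset.mem_univ _⟩
  have hcard : (Finset.univ : Finset (Fin q)).card ≤ q := by simp
  have h := hC Finset.univ hne hcard n hmono (fun I _ hIne => hnvs I hIne)
  have hmin : Finset.univ.min' hne = (⟨0, hq⟩ : Fin q) := by
    refine le_antisymm (Finset.min'_le _ _ (Finset.mem_univ _)) ?_
    refine Finset.le_min' _ _ _ fun y _ => ?_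
    exact Fin.le_def.mpr (Nat.zero_le _)
  rwa [hmin] at h
end

section
/- Let L = ℚ(√d) be a real quadratic field (d ≥ 2 squarefree) and let T ∈ ℕ. The set of non-degenerate solutions (v_1, …, v_T) ∈ (O_L^×)^T of the unit equation v_1 + ⋯ + v_T = 1, i.e. solutions such that no subsum Σ_{i∈I} v_i with ∅ ≠ I ⊆ {1,…,T} vanishes, is finite. -/
open NumberField IntermediateField Filter

/-- The complex absolute value, as an `AbsoluteValue`. -/
noncomputable abbrev Complex.abs : AbsoluteValue ℂ ℝ := NormedField.toAbsoluteValue ℂ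

/-- Along an ultrafilter, a function that eventually takes values in a finite set is
eventually constant. -/
lemma ultra_exists_const {α β : Type*} (U : Ultrafilter α) {g : α → β} {F : Set β}
    (hF : F.Finite) (h : ∀ᶠ a in (U : Filter α), g a ∈ F) :
    ∃ c, ∀ᶠ a in (U : Filter α), g a = c := by
  classical
  by_contra h'
  push_neg at h'
  have h2 : ∀ c ∈ F, {a | g a ≠ c} ∈ U := by
    intro c _
    have := h' c
    exact Ultrafilter.mem_coe.mp this
  have h3 : (⋂ c ∈ F, {a | g a ≠ c}) ∈ U := (Filter.biInter_mem hF).mpr h2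
  have h4 := Filter.inter_mem (Ultrafilter.mem_coe.mpr h) h3
  obtain ⟨a, ha1, ha2⟩ := Ultrafilter.nonempty_of_mem h4
  have := Set.mem_iInter₂.mp ha2 (g a) ha1
  exact this rfl

/-- Product over all complex embeddings of the absolute values equals the absolute value
of the rational norm. -/
lemma prod_abs_embeddings {K : Type*} [Field K] [NumberField K] (x : K) :
    ∏ φ : K →+* ℂ, Complex.abs (φ x) = |Algebra.norm ℚ x| := by
  calc ∏ φ : K →+* ℂ, Complex.abs (φ x)
      = ∏ σ : K →ₐ[ℚ] ℂ, Complex.abs (σ x) :=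
        Fintype.prod_equiv (RingHom.equivRatAlgHom K ℂ) _ _ (fun φ => rfl)
    _ = Complex.abs (∏ σ : K →ₐ[ℚ] ℂ, σ x) := (map_prod Complex.abs _ _).symm
    _ = Complex.abs (algebraMap ℚ ℂ (Algebra.norm ℚ x)) := by
        rw [Algebra.norm_eq_prod_embeddings]
    _ = |Algebra.norm ℚ x| := by
        rw [show (algebraMap ℚ ℂ) (Algebra.norm ℚ x) = (((Algebra.norm ℚ x : ℚ) : ℝ) : ℂ) by
          push_cast [eq_ratCast]; rfl]
        rw [show Complex.abs (((Algebra.norm ℚ x : ℚ) : ℝ) : ℂ) = |((Algebra.norm ℚ x : ℚ) : ℝ)| from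
          (Complex.norm_real _).trans (Real.norm_eq_abs _)]
        push_cast
        rfl

set_option maxHeartbeats 2000000 in
/-- Finiteness of non-degenerate solutions of the unit equation `v₁ + ⋯ + v_T = 1` in the
units of the ring of integers of a real quadratic field. -/
theorem unit_equation_finitely_many_nondegenerate_solutions
    (d : ℕ) (hd : 2 ≤ d) (hsf : Squarefree d)
    (L : IntermediateField ℚ ℝ) (hL : L = ℚ⟮(Real.sqrt d)⟯)
    (T : ℕ) (hT : 1 ≤ T) :
    {v : Fin T → (𝓞 L)ˣ |
      (∑ i, ((v i : 𝓞 L) : L)) = 1 ∧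
      NoVanishingSubsum (fun i : Fin T => ((v i : 𝓞 L) : L))}.Finite := by
  classical
  subst hL
  have hd0 : (0 : ℝ) ≤ (d : ℝ) := by positivity
  have hint : IsIntegral ℚ (Real.sqrt d) := by
    refine ⟨Polynomial.X ^ 2 - Polynomial.C (d : ℚ), Polynomial.monic_X_pow_sub_C _ two_ne_zero, ?_⟩
    simp only [Polynomial.eval₂_sub, Polynomial.eval₂_pow, Polynomial.eval₂_X, Polynomial.eval₂_C]
    rw [Real.sq_sqrt hd0]
    norm_num
  haveI hfd : FiniteDimensional ℚ ℚ⟮(Real.sqrt d)⟯ :=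
    IntermediateField.adjoin.finiteDimensional hint
  haveI : NumberField ℚ⟮(Real.sqrt d)⟯ := ⟨⟩
  set K : IntermediateField ℚ ℝ := ℚ⟮(Real.sqrt d)⟯ with hKdef
  have hdeg : Module.finrank ℚ K ≤ 2 := by
    rw [IntermediateField.adjoin.finrank hint]
    have hne : (Polynomial.X ^ 2 - Polynomial.C (d : ℚ)) ≠ 0 := by
      intro h
      have := congr_arg Polynomial.natDegree h
      rw [Polynomial.natDegree_X_pow_sub_C] at this
      simp at this
    have hdvd : minpoly ℚ (Real.sqrt d) ∣ (Polynomial.X ^ 2 - Polynomial.C (d : ℚ)) := by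
      apply minpoly.dvd
      simp only [map_sub, map_pow, Polynomial.aeval_X, Polynomial.aeval_C]
      rw [Real.sq_sqrt hd0]
      norm_num
    have := Polynomial.natDegree_le_of_dvd hdvd hne
    rwa [Polynomial.natDegree_X_pow_sub_C] at this
  by_contra hS
  have hS' : Set.Infinite _ := hS
  set f := Set.Infinite.natEmbedding _ hS' with hf
  set v : ℕ → Fin T → (𝓞 K)ˣ := fun k => (f k : _) with hvdef
  have hv : ∀ k, (∑ i, ((v k i : 𝓞 K) : K)) = 1 ∧
      NoVanishingSubsum (fun i : Fin T => ((v k i : 𝓞 K) : K)) := fun k => (f k).2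
  have hvinj : Function.Injective v := by
    intro k l h
    have : f k = f l := Subtype.ext h
    exact f.injective this
  set U : Ultrafilter ℕ := Filter.hyperfilter ℕ with hU
  haveI : Nonempty (Fin T) := Fin.pos_iff_nonempty.mp hT
  set a : ℕ → Fin T → (K →+* ℂ) → ℝ := fun k i e => Complex.abs (e ((v k i : 𝓞 K) : K))
    with hadef
  have hapos : ∀ k i e, 0 < a k i e := by
    intro k i e
    apply AbsoluteValue.pos
    apply (map_ne_zero e).mpr
    exact NumberField.Units.coe_ne_zero (v k i)
  set M : ℕ → ℝ := fun k =>
    Finset.univ.sup' Finset.univ_nonempty (fun p : Fin T × (K →+* ℂ) => a k p.1 p.2) with hMdef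
  have hMa : ∀ k i e, a k i e ≤ M k := fun k i e =>
    Finset.le_sup' (f := fun p : Fin T × (K →+* ℂ) => a k p.1 p.2) (Finset.mem_univ (i, e))
  by_cases hb : ∃ B : ℝ, {k | M k ≤ B} ∈ U
  · -- bounded case : finitely many possible tuples, contradiction with injectivity
    obtain ⟨B, hB⟩ := hb
    have hFfin : {x : K | IsIntegral ℤ x ∧ ∀ φ : K →+* ℂ, ‖φ x‖ ≤ B}.Finite :=
      NumberField.Embeddings.finite_of_norm_le K ℂ B
    set G : ℕ → (Fin T → K) := fun k => fun i => ((v k i : 𝓞 K) : K) with hGdef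
    have hGinj : Function.Injective G := by
      intro k l h
      apply hvinj
      funext i
      have := congr_fun h i
      exact Units.ext (NumberField.RingOfIntegers.coe_injective this)
    have hsub : {k | M k ≤ B} ⊆ G ⁻¹'
        (Set.univ.pi fun _ : Fin T =>
          {x : K | IsIntegral ℤ x ∧ ∀ φ : K →+* ℂ, ‖φ x‖ ≤ B}) := by
      intro k hk
      intro i _
      refine ⟨NumberField.RingOfIntegers.isIntegral_coe _, fun φ => ?_⟩
      calc ‖φ ((v k i : 𝓞 K) : K)‖ = a k i φ := rfl
        _ ≤ M k := hMa k i φ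
        _ ≤ B := hk
    have hfin : {k | M k ≤ B}.Finite := by
      apply Set.Finite.subset _ hsub
      apply Set.Finite.preimage hGinj.injOn
      exact Set.Finite.pi fun _ => hFfin
    exact Filter.notMem_hyperfilter_of_finite hfin hB
  · -- unbounded case
    push_neg at hb
    have hub : ∀ B : ℝ, ∀ᶠ k in (U : Filter ℕ), B < M k := by
      intro B
      have := Ultrafilter.compl_mem_iff_notMem.mpr (hb B)
      have h2 : {k | M k ≤ B}ᶜ = {k | B < M k} := by
        ext k; simp [not_le]
      rw [h2] at this
      exact this
    -- choose an eventual argmax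
    have hargmax : ∀ k, ∃ p : Fin T × (K →+* ℂ), M k = a k p.1 p.2 := by
      intro k
      obtain ⟨p, _, hp⟩ := Finset.exists_mem_eq_sup' (Finset.univ_nonempty)
        (fun p : Fin T × (K →+* ℂ) => a k p.1 p.2)
      exact ⟨p, hp⟩
    choose p hp using hargmax
    obtain ⟨⟨i0, e0⟩, hp0⟩ : ∃ p0, ∀ᶠ k in (U : Filter ℕ), p k = p0 :=
      ultra_exists_const U Set.finite_univ (by simp)
    have hm : ∀ᶠ k in (U : Filter ℕ), M k = a k i0 e0 := by
      filter_upwards [hp0] with k hk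
      rw [hp k, hk]
    -- a second embedding exists
    have he1 : ∃ e1 : K →+* ℂ, e1 ≠ e0 := by
      by_contra hcon
      push_neg at hcon
      haveI hss : Subsingleton (K →+* ℂ) := ⟨fun x y => (hcon x).trans (hcon y).symm⟩
      have hall : ∀ k i (e : K →+* ℂ), a k i e = 1 := by
        intro k i e
        have hnorm : ∏ φ : K →+* ℂ, Complex.abs (φ ((v k i : 𝓞 K) : K)) = 1 := by
          rw [prod_abs_embeddings]
          exact_mod_cast congr_arg (fun q : ℚ => (q : ℝ)) (NumberField.Units.norm _ (v k i))
        rw [Fintype.prod_subsingleton _ e] at hnorm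
        exact hnorm
      have hM1 : ∀ k, M k ≤ 1 := by
        intro k
        apply Finset.sup'_le
        intro q _
        rw [hall]
      obtain ⟨k, hk⟩ := (hub 1).exists
      exact absurd (hM1 k) (not_le.mpr hk)
    obtain ⟨e1, he10⟩ := he1
    have hcard2 : (Finset.univ : Finset (K →+* ℂ)) = {e0, e1} := by
      symm
      apply Finset.eq_univ_of_card
      rw [Finset.card_insert_of_notMem (by simp [Ne.symm he10]), Finset.card_singleton]
      have h2 : 2 ≤ Fintype.card (K →+* ℂ) :=
        Fintype.one_lt_card_iff_nontrivial.mpr ⟨⟨e1, e0, he10⟩⟩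
      have h2' : Fintype.card (K →+* ℂ) ≤ 2 := by
        rw [NumberField.Embeddings.card K ℂ]; exact hdeg
      omega
    have hprod : ∀ u : (𝓞 K)ˣ,
        Complex.abs (e0 ((u : 𝓞 K) : K)) * Complex.abs (e1 ((u : 𝓞 K) : K)) = 1 := by
      intro u
      have h := prod_abs_embeddings ((u : 𝓞 K) : K)
      rw [hcard2, Finset.prod_insert (by simp [Ne.symm he10]), Finset.prod_singleton] at h
      rw [h]
      exact_mod_cast congr_arg (fun q : ℚ => (q : ℝ)) (NumberField.Units.norm _ u)
    -- the set of indices whose e0-value is comparable with the max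
    set A : Finset (Fin T) := Finset.univ.filter (fun i => ∃ δ : ℝ, 0 < δ ∧
      ∀ᶠ k in (U : Filter ℕ), δ * M k ≤ a k i e0) with hAdef
    have hi0A : i0 ∈ A := by
      rw [hAdef, Finset.mem_filter]
      refine ⟨Finset.mem_univ _, 1, one_pos, ?_⟩
      filter_upwards [hm] with k hk
      rw [one_mul, hk]
    -- smallness for indices not in A
    have hsmall : ∀ i : Fin T, i ∉ A → ∀ δ : ℝ, 0 < δ →
        ∀ᶠ k in (U : Filter ℕ), a k i e0 < δ * M k := by
      intro i hiA δ hδ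
      have hQn : ¬ (∃ δ : ℝ, 0 < δ ∧ ∀ᶠ k in (U : Filter ℕ), δ * M k ≤ a k i e0) := by
        intro hQi
        exact hiA (Finset.mem_filter.mpr ⟨Finset.mem_univ _, hQi⟩)
      push_neg at hQn
      have h2 : {k | δ * M k ≤ a k i e0}ᶜ ∈ U := by
        rw [show {k | δ * M k ≤ a k i e0}ᶜ = {k | a k i e0 < δ * M k} by ext k; simp [not_le]]
        exact hQn δ hδ
      have h3 : {k | δ * M k ≤ a k i e0}ᶜ = {k | a k i e0 < δ * M k} := by
        ext k; simp [not_le]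
      rw [h3] at h2
      exact h2
    -- constants c i with v k i = c i * v k i0 along U, for i ∈ A
    have hcex : ∀ i : Fin T, ∃ c : K, i ∈ A →
        ∀ᶠ k in (U : Filter ℕ), ((v k i : 𝓞 K) : K) = c * ((v k i0 : 𝓞 K) : K) := by
      intro i
      by_cases hiA : i ∈ A
      · obtain ⟨δ, hδ, hδU⟩ := (Finset.mem_filter.mp hiA).2
        set u : ℕ → (𝓞 K)ˣ := fun k => v k i * (v k i0)⁻¹ with hudef
        set g : ℕ → K := fun k => ((u k : 𝓞 K) : K) with hgdef
        have hginv : ∀ k, g k = ((v k i : 𝓞 K) : K) * (((v k i0 : 𝓞 K) : K))⁻¹ := by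
          intro k
          show ((v k i * (v k i0)⁻¹ : (𝓞 K)ˣ) : K) = _
          rw [NumberField.Units.coe_mul, ← zpow_neg_one (v k i0),
            NumberField.Units.coe_zpow, zpow_neg_one]
        set B0 : ℝ := max 1 (1 / δ) with hB0def
        have hgF : ∀ᶠ k in (U : Filter ℕ),
            g k ∈ {x : K | IsIntegral ℤ x ∧ ∀ φ : K →+* ℂ, ‖φ x‖ ≤ B0} := by
          filter_upwards [hδU, hm] with k hk1 hk2
          refine ⟨NumberField.RingOfIntegers.isIntegral_coe _, ?_⟩
          have he0g : Complex.abs (e0 (g k)) = a k i e0 / a k i0 e0 := by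
            rw [hginv k, map_mul, map_inv₀, map_mul Complex.abs, map_inv₀ Complex.abs,
              div_eq_mul_inv]
          have he0g_lb : δ ≤ Complex.abs (e0 (g k)) := by
            rw [he0g, le_div_iff₀ (hapos k i0 e0), ← hk2]
            exact hk1
          have he0g_ub : Complex.abs (e0 (g k)) ≤ 1 := by
            rw [he0g, div_le_one (hapos k i0 e0), ← hk2]
            exact hMa k i e0
          have hful : Complex.abs (e0 (g k)) * Complex.abs (e1 (g k)) = 1 := hprod (u k)
          have he1g : Complex.abs (e1 (g k)) ≤ 1 / δ := by
            have h0 : 0 < Complex.abs (e0 (g k)) := lt_of_lt_of_le hδ he0g_lb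
            calc Complex.abs (e1 (g k)) = 1 / Complex.abs (e0 (g k)) :=
                  eq_one_div_of_mul_eq_one_left (by rw [mul_comm]; exact hful)
              _ ≤ 1 / δ := one_div_le_one_div_of_le hδ he0g_lb
          intro φ
          have hφ : φ = e0 ∨ φ = e1 := by
            have := Finset.mem_univ φ
            rw [hcard2] at this
            simpa using this
          rcases hφ with h | h
          · rw [h]
            calc ‖e0 (g k)‖ = Complex.abs (e0 (g k)) := rfl
              _ ≤ 1 := he0g_ub
              _ ≤ B0 := le_max_left _ _
          · rw [h]
            calc ‖e1 (g k)‖ = Complex.abs (e1 (g k)) := rfl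
              _ ≤ 1 / δ := he1g
              _ ≤ B0 := le_max_right _ _
        obtain ⟨c, hc⟩ := ultra_exists_const U
          (NumberField.Embeddings.finite_of_norm_le K ℂ B0) hgF
        refine ⟨c, fun _ => ?_⟩
        filter_upwards [hc] with k hk
        have hne : ((v k i0 : 𝓞 K) : K) ≠ 0 := NumberField.Units.coe_ne_zero (v k i0)
        have h5 := (hginv k).symm.trans hk
        rw [mul_inv_eq_iff_eq_mul₀ hne] at h5
        exact h5
      · exact ⟨0, fun h => absurd h hiA⟩
    choose c hc using hcex
    -- the sum of the constants over A vanishes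
    have hz : (∑ i ∈ A, c i) = 0 := by
      have he0sum : Complex.abs (∑ i ∈ A, e0 (c i)) = 0 := by
        by_contra hne
        set ε : ℝ := Complex.abs (∑ i ∈ A, e0 (c i)) with hεdef
        have hε : 0 < ε := lt_of_le_of_ne (AbsoluteValue.nonneg _ _) (Ne.symm hne)
        set δ' : ℝ := ε / (2 * T) with hδ'def
        have hT0 : (0 : ℝ) < T := by exact_mod_cast hT
        have hδ' : 0 < δ' := by positivity
        have hsmall' : ∀ᶠ k in (U : Filter ℕ), ∀ i ∈ Finset.univ \ A, a k i e0 < δ' * M k := by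
          rw [Filter.eventually_all_finset]
          intro i hi
          exact hsmall i (Finset.mem_sdiff.mp hi).2 δ' hδ'
        have hcA : ∀ᶠ k in (U : Filter ℕ), ∀ i ∈ A,
            ((v k i : 𝓞 K) : K) = c i * ((v k i0 : 𝓞 K) : K) := by
          rw [Filter.eventually_all_finset]
          intro i hi
          exact hc i hi
        obtain ⟨k, hk⟩ := ((hm.and hsmall').and (hcA.and (hub (2 / ε)))).exists
        obtain ⟨⟨hkm, hksmall⟩, hkc, hkB⟩ := hk
        -- apply e0 to the unit equation
        have hsum1 : (∑ i, e0 ((v k i : 𝓞 K) : K)) = 1 := by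
          rw [← map_sum, (hv k).1, map_one]
        have hsplit := Finset.sum_sdiff (f := fun i => e0 ((v k i : 𝓞 K) : K))
          (Finset.subset_univ A)
        rw [hsum1] at hsplit
        have hAc : (∑ i ∈ A, e0 ((v k i : 𝓞 K) : K))
            = (∑ i ∈ A, e0 (c i)) * e0 ((v k i0 : 𝓞 K) : K) := by
          rw [Finset.sum_mul]
          apply Finset.sum_congr rfl
          intro i hi
          rw [hkc i hi, map_mul]
        have hkey : (∑ i ∈ A, e0 (c i)) * e0 ((v k i0 : 𝓞 K) : K)
            = 1 - ∑ i ∈ Finset.univ \ A, e0 ((v k i : 𝓞 K) : K) := by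
          rw [← hAc]
          linear_combination hsplit
        have habs : ε * a k i0 e0 ≤ 1 + ∑ i ∈ Finset.univ \ A, a k i e0 := by
          have h2 := congr_arg Complex.abs hkey
          rw [map_mul] at h2
          calc ε * a k i0 e0
              = Complex.abs (1 - ∑ i ∈ Finset.univ \ A, e0 ((v k i : 𝓞 K) : K)) := h2
            _ ≤ Complex.abs 1 + Complex.abs (∑ i ∈ Finset.univ \ A, e0 ((v k i : 𝓞 K) : K)) :=
                AbsoluteValue.sub_le_add _ _ _
            _ ≤ 1 + ∑ i ∈ Finset.univ \ A, a k i e0 := by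
                rw [map_one]
                gcongr
                exact AbsoluteValue.sum_le _ _ _
        have hcardle : (((Finset.univ : Finset (Fin T)) \ A).card : ℝ) ≤ T := by
          have := Finset.card_le_card (Finset.subset_univ ((Finset.univ : Finset (Fin T)) \ A))
          rw [Finset.card_univ, Fintype.card_fin] at this
          exact_mod_cast this
        have hMk : 0 < M k := lt_of_lt_of_le (hapos k i0 e0) (hMa k i0 e0)
        have hsumsmall : ∑ i ∈ Finset.univ \ A, a k i e0 ≤ T * (δ' * M k) := by
          calc ∑ i ∈ Finset.univ \ A, a k i e0
              ≤ ∑ _i ∈ Finset.univ \ A, δ' * M k :=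
                Finset.sum_le_sum fun i hi => (hksmall i hi).le
            _ = ((Finset.univ : Finset (Fin T)) \ A).card * (δ' * M k) := by
                rw [Finset.sum_const, nsmul_eq_mul]
            _ ≤ T * (δ' * M k) := by
                have hdm : (0:ℝ) ≤ δ' * M k := by positivity
                exact mul_le_mul_of_nonneg_right hcardle hdm
        have hfinal : ε * M k ≤ 1 + (ε / 2) * M k := by
          calc ε * M k = ε * a k i0 e0 := by rw [hkm]
            _ ≤ 1 + ∑ i ∈ Finset.univ \ A, a k i e0 := habs
            _ ≤ 1 + T * (δ' * M k) := by linarith [hsumsmall]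
            _ = 1 + (ε / 2) * M k := by
                rw [hδ'def]
                have hTne : (T:ℝ) ≠ 0 := hT0.ne'
                field_simp
        have hhalf : (ε / 2) * M k ≤ 1 := by linarith
        have h2e : 2 / ε < M k := hkB
        have hmul : (ε / 2) * (2 / ε) < (ε / 2) * M k :=
          mul_lt_mul_of_pos_left h2e (half_pos hε)
        have hone : (ε / 2) * (2 / ε) = 1 := by field_simp
        linarith
      have h0 : (∑ i ∈ A, e0 (c i)) = 0 := by
        rwa [map_eq_zero] at he0sum
      apply e0.injective
      rw [map_sum, map_zero]
      exact h0
    -- final contradiction : vanishing subsum over A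
    have hcA : ∀ᶠ k in (U : Filter ℕ), ∀ i ∈ A,
        ((v k i : 𝓞 K) : K) = c i * ((v k i0 : 𝓞 K) : K) := by
      rw [Filter.eventually_all_finset]
      intro i hi
      exact hc i hi
    obtain ⟨k, hk⟩ := hcA.exists
    have hvan : ∑ i ∈ A, ((v k i : 𝓞 K) : K) = 0 := by
      calc ∑ i ∈ A, ((v k i : 𝓞 K) : K)
          = ∑ i ∈ A, c i * ((v k i0 : 𝓞 K) : K) := Finset.sum_congr rfl hk
        _ = (∑ i ∈ A, c i) * ((v k i0 : 𝓞 K) : K) := by rw [Finset.sum_mul]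
        _ = 0 := by rw [hz, zero_mul]
    exact (hv k).2 A ⟨i0, hi0A⟩ hvan
end

section
/- Let L = ℚ(√d) be a real quadratic field (d ≥ 2 squarefree, embedded in ℝ with √d > 0) with fundamental unit η > 1, let ℓ ∈ ℕ and c = (c_1,…,c_ℓ) ∈ (L^×)^ℓ, and define T_{L,ℓ}^c(X) as the number of tuples (u_1,…,u_ℓ) ∈ (O_L^×)^ℓ with |Tr_{L/ℚ}(c_1 u_1) + ⋯ + Tr_{L/ℚ}(c_ℓ u_ℓ)| ≤ X, such that c_1 u_1 + ⋯ + c_ℓ u_ℓ + c_1' u_1' + ⋯ + c_ℓ' u_ℓ' has no vanishing subsum and |u_i| ≥ 1 for all i. Then for X ≥ 2, T_{L,ℓ}^c(X) ≤ (2 log X / log η)^ℓ + O_{L,ℓ,c}((log X)^{ℓ−1}). -/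
open NumberField IntermediateField

/-- The counting function `T_{L,ℓ}^c(X)`: the number of tuples `(u₁, …, u_ℓ)` of units
with `|Tr(c₁u₁) + ⋯ + Tr(c_ℓu_ℓ)| ≤ X`, such that
`c₁u₁ + ⋯ + c_ℓu_ℓ + c₁'u₁' + ⋯ + c_ℓ'u_ℓ'` has no vanishing subsum and `|u_i| ≥ 1`. -/
noncomputable def TraceSumCount (L : IntermediateField ℚ ℝ) (σ : L ≃ₐ[ℚ] L) (ℓ : ℕ)
    (c : Fin ℓ → L) (X : ℝ) : ℕ :=
  Set.ncard {u : Fin ℓ → (𝓞 L)ˣ |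
    |((∑ i, (c i * ((u i : 𝓞 L) : L) + σ (c i * ((u i : 𝓞 L) : L))) : L) : ℝ)| ≤ X ∧
    NoVanishingSubsum (Sum.elim (fun i : Fin ℓ => c i * ((u i : 𝓞 L) : L))
      (fun i : Fin ℓ => σ (c i * ((u i : 𝓞 L) : L)))) ∧
    ∀ i, 1 ≤ |(((u i : 𝓞 L) : L) : ℝ)|}

lemma coe_zpow' (L : IntermediateField ℚ ℝ) (x : L) (n : ℤ) : ((x^n:L):ℝ) = (x:ℝ)^n := by
  rw [← IntermediateField.algebraMap_apply, map_zpow₀, IntermediateField.algebraMap_apply]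

lemma exists_pos_lb (S : Set ℝ) (hS : S.Finite) (h : ∀ x ∈ S, 0 < x) :
    ∃ δ : ℝ, 0 < δ ∧ δ ≤ 1 ∧ ∀ x ∈ S, δ ≤ x := by
  rcases S.eq_empty_or_nonempty with rfl | hne
  · exact ⟨1, one_pos, le_refl 1, by simp⟩
  · have hne' : hS.toFinset.Nonempty := by simpa [Set.Finite.toFinset_nonempty] using hne
    set m := hS.toFinset.min' hne' with hm
    have hmS : m ∈ S := by
      have := hS.toFinset.min'_mem hne'
      simpa [Set.Finite.mem_toFinset] using this
    refine ⟨min m 1, lt_min (h m hmS) one_pos, min_le_right _ _, fun x hx => ?_⟩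
    exact le_trans (min_le_left _ _) (hS.toFinset.min'_le x (by simpa [Set.Finite.mem_toFinset] using hx))

lemma cluster (L : IntermediateField ℚ ℝ) (ι : Type) [Fintype ι] [Nonempty ι]
    (θ : L) (hθ1 : 1 < (θ : ℝ)) (b : ι → L) :
    ∃ δ : ℝ, 0 < δ ∧ δ ≤ 1 ∧ ∀ (ε : ι → L), (∀ j, ε j = 1 ∨ ε j = -1) → ∀ (e : ι → ℤ),
      NoVanishingSubsum (fun j => ε j * b j * θ ^ (e j)) →
      ∀ j₀ : ι, ((θ : ℝ)) ^ (e j₀) ≤ δ⁻¹ * |((∑ j, ε j * b j * θ ^ (e j) : L) : ℝ)| := by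
  classical
  set t : ℝ := (θ : ℝ) with htdef
  have ht : 1 < t := hθ1
  have ht0 : 0 < t := lt_trans one_pos ht
  have hθ0 : θ ≠ 0 := by
    intro h
    rw [htdef, h] at ht
    norm_num at ht
  set q : ℕ := Fintype.card ι with hqdef
  have hq : 0 < q := Fintype.card_pos
  -- bound on coefficients
  obtain ⟨C, hC1, hCb⟩ : ∃ C : ℝ, 1 ≤ C ∧ ∀ j, |((b j : L) : ℝ)| ≤ C := by
    refine ⟨max (Finset.univ.sup' Finset.univ_nonempty (fun j => |((b j : L) : ℝ)|)) 1,
      le_max_right _ _, fun j => le_trans ?_ (le_max_left _ _)⟩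
    exact Finset.le_sup' (fun j => |((b j : L) : ℝ)|) (Finset.mem_univ j)
  have hC0 : 0 < C := lt_of_lt_of_le one_pos hC1
  -- the finite sets of candidate cluster values
  set V : ℕ → Set L := fun K => Set.range
    (fun p : Finset ι × (ι → ({1, -1} : Finset L)) × (ι → Fin (K+1)) =>
      (∑ j ∈ p.1, ((p.2.1 j : L) * b j * θ ^ (-((p.2.2 j : ℕ) : ℤ))) : L)) with hV
  have hVfin : ∀ K, (V K).Finite := fun K => Set.finite_range _
  -- lower bounds on nonzero candidate values
  have hδ : ∀ K : ℕ, ∃ δ : ℝ, 0 < δ ∧ δ ≤ 1 ∧ ∀ x ∈ V K, x ≠ 0 → δ ≤ |(x : ℝ)| := by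
    intro K
    obtain ⟨δ, hδ0, hδ1, hδlb⟩ := exists_pos_lb
      ((fun x : L => |(x : ℝ)|) '' (V K ∩ {x | x ≠ 0}))
      (((hVfin K).inter_of_left _).image _)
      (by
        rintro x ⟨y, ⟨-, hy0⟩, rfl⟩
        have : (y : ℝ) ≠ 0 := by
          intro h
          exact hy0 (by exact_mod_cast h)
        exact abs_pos.mpr this)
    exact ⟨δ, hδ0, hδ1, fun x hx hx0 => hδlb _ ⟨x, ⟨hx, hx0⟩, rfl⟩⟩
  choose δf hδf0 hδf1 hδflb using hδ
  -- the gap function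
  have hg : ∀ K : ℕ, ∃ K' : ℕ, K < K' ∧ (q * C) * t ^ (-(K' : ℤ)) < δf K / 2 := by
    intro K
    obtain ⟨n, hn⟩ := pow_unbounded_of_one_lt (2 * q * C / δf K) ht
    refine ⟨max n (K + 1), lt_of_lt_of_le (Nat.lt_succ_self K) (le_max_right _ _), ?_⟩
    have hmax : (n:ℤ) ≤ ((max n (K+1) : ℕ) : ℤ) := by exact_mod_cast le_max_left n (K+1)
    have h1 : t ^ (-((max n (K+1) : ℕ) : ℤ)) ≤ t ^ (-(n : ℤ)) :=
      zpow_le_zpow_right₀ (le_of_lt ht) (neg_le_neg hmax)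
    have h2 : (q * C) * t ^ (-(n : ℤ)) < δf K / 2 := by
      have htn : (0:ℝ) < t ^ n := pow_pos ht0 n
      rw [zpow_neg, zpow_natCast, ← div_eq_mul_inv, div_lt_iff₀ htn]
      rw [div_lt_iff₀ (hδf0 K)] at hn
      nlinarith [hδf0 K]
    calc (q * C) * t ^ (-((max n (K+1) : ℕ) : ℤ)) ≤ (q * C) * t ^ (-(n : ℤ)) := by
          apply mul_le_mul_of_nonneg_left h1 (by positivity)
      _ < δf K / 2 := h2
  choose gf hgf1 hgf2 using hg
  set Kseq : ℕ → ℕ := fun n => gf^[n] 0 with hKseq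
  have hKmono : StrictMono Kseq := by
    apply strictMono_nat_of_lt_succ
    intro n
    rw [hKseq]
    simp only [Function.iterate_succ_apply']
    exact hgf1 _
  have hKzero : Kseq 0 = 0 := rfl
  -- the final δ
  set δstar : ℝ := (Finset.range (q+1)).inf' ⟨0, Finset.mem_range.mpr (Nat.succ_pos q)⟩
    (fun n => δf (Kseq n)) with hδstar
  have hδstar0 : 0 < δstar := by
    rw [hδstar]
    apply (Finset.lt_inf'_iff _).mpr
    intro i _
    exact hδf0 _
  have hδstar1 : δstar ≤ 1 := le_trans (Finset.inf'_le _ (Finset.mem_range.mpr (Nat.succ_pos q))) (hδf1 _)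
  refine ⟨δstar / 2, by linarith, by linarith, ?_⟩
  intro ε hε e hNVS j₀
  set z : ι → L := fun j => ε j * b j * θ ^ (e j) with hz
  have hεabs : ∀ j, |((ε j : L) : ℝ)| = 1 := by
    intro j
    rcases hε j with h | h <;> rw [h] <;> push_cast <;> simp
  set m : ℤ := Finset.univ.sup' Finset.univ_nonempty e with hm
  obtain ⟨jm, -, hjm⟩ := Finset.exists_mem_eq_sup' Finset.univ_nonempty e
  have hem : ∀ j, e j ≤ m := fun j => Finset.le_sup' e (Finset.mem_univ j)
  set k : ι → ℕ := fun j => (m - e j).toNat with hk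
  have hke : ∀ j, e j = m - (k j : ℤ) := by
    intro j
    rw [hk]
    simp only
    rw [Int.toNat_of_nonneg (sub_nonneg.mpr (hem j))]
    ring
  set I : ℕ → Finset ι := fun n => Finset.univ.filter (fun j => k j ≤ Kseq n) with hI
  have hImono : ∀ {a b : ℕ}, a ≤ b → I a ⊆ I b := by
    intro a b hab j hj
    simp only [hI, Finset.mem_filter] at *
    exact ⟨hj.1, le_trans hj.2 (hKmono.monotone hab)⟩
  have hjm0 : jm ∈ I 0 := by
    simp only [hI, Finset.mem_filter]
    refine ⟨Finset.mem_univ _, ?_⟩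
    rw [hKzero, hk]
    simp [← hjm]
    exact ⟨jm, (hm.trans hjm).le⟩
  have hpig : ∃ n₀, n₀ < q ∧ I n₀ = I (n₀ + 1) := by
    by_contra hcon
    push_neg at hcon
    have hcard : ∀ n, n ≤ q → n + 1 ≤ (I n).card := by
      intro n
      induction n with
      | zero => intro _; exact Finset.card_pos.mpr ⟨jm, hjm0⟩
      | succ n ih =>
        intro hn
        have h1 : n + 1 ≤ (I n).card := ih (by omega)
        have hss : I n ⊂ I (n+1) :=
          HasSubset.Subset.ssubset_of_ne (hImono (Nat.le_succ n)) (hcon n (by omega))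
        have := Finset.card_lt_card hss
        omega
    have h2 := hcard q (le_refl q)
    have hle : (I q).card ≤ q := by
      have := Finset.card_le_univ (I q)
      simpa [hqdef] using this
    omega
  obtain ⟨n₀, hn₀q, hIn₀⟩ := hpig
  set K₀ : ℕ := Kseq n₀ with hK₀
  have hδKle : δstar ≤ δf K₀ := Finset.inf'_le _ (Finset.mem_range.mpr (by omega))
  have hsplit : ∑ j, z j = (∑ j ∈ I n₀, z j)
      + ∑ j ∈ Finset.univ.filter (fun j => ¬ k j ≤ K₀), z j := by
    rw [hI]
    exact (Finset.sum_filter_add_sum_filter_not Finset.univ _ z).symm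
  set v : L := ∑ j ∈ I n₀, ε j * b j * θ ^ (-(k j : ℤ)) with hv
  have hmainS : ∑ j ∈ I n₀, z j = θ ^ m * v := by
    rw [hv, Finset.mul_sum]
    apply Finset.sum_congr rfl
    intro j _
    rw [hz]
    simp only
    rw [hke j, sub_eq_add_neg, zpow_add₀ hθ0]
    ring
  have hvV : v ∈ V K₀ := by
    refine ⟨(I n₀, fun j => ⟨if ε j = 1 then 1 else -1,
        by by_cases h : ε j = 1 <;> simp [h]⟩,
      fun j => ⟨min (k j) K₀, by omega⟩), ?_⟩
    simp only [hV]
    rw [hv]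
    apply Finset.sum_congr rfl
    intro j hj
    have hjk : k j ≤ K₀ := by
      have := (Finset.mem_filter.mp (by rwa [hI] at hj : j ∈ Finset.univ.filter (fun j => k j ≤ Kseq n₀))).2
      exact this
    rw [min_eq_left hjk]
    rcases hε j with h | h <;> rw [h] <;> norm_num
  have hIne : (I n₀).Nonempty := ⟨jm, hImono (Nat.zero_le n₀) hjm0⟩
  have hS₁0 : ∑ j ∈ I n₀, z j ≠ 0 := hNVS (I n₀) hIne
  have hv0 : v ≠ 0 := by
    intro h
    exact hS₁0 (by rw [hmainS, h, mul_zero])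
  have hvlb : δf K₀ ≤ |((v : L) : ℝ)| := hδflb K₀ v hvV hv0
  have hcoe_zpowθ : ∀ (r : ℤ), ((θ ^ r : L) : ℝ) = t ^ r := fun r => coe_zpow' L θ r
  have hS₁abs : |((∑ j ∈ I n₀, z j : L) : ℝ)| = t ^ m * |((v : L) : ℝ)| := by
    rw [hmainS]
    push_cast
    rw [hcoe_zpowθ, abs_mul, abs_of_pos (zpow_pos ht0 m)]
  set J : Finset ι := Finset.univ.filter (fun j => ¬ k j ≤ K₀) with hJ
  have hzabs : ∀ j, |((z j : L) : ℝ)| = |((ε j : L) : ℝ)| * |((b j : L) : ℝ)| * t ^ (e j) := by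
    intro j
    rw [hz]
    simp only
    push_cast
    rw [hcoe_zpowθ, abs_mul, abs_mul, abs_of_pos (zpow_pos ht0 _)]
  have hJbound : ∀ j ∈ J, |((z j : L) : ℝ)| ≤ C * (t ^ m * t ^ (-(gf K₀ : ℤ))) := by
    intro j hj
    have hjn : j ∉ I n₀ := by
      rw [hJ, Finset.mem_filter] at hj
      rw [hI, Finset.mem_filter]
      intro h
      exact hj.2 h.2
    have hjn1 : j ∉ I (n₀ + 1) := by rw [← hIn₀]; exact hjn
    have hkj : Kseq (n₀ + 1) < k j := by
      by_contra h
      push_neg at h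
      exact hjn1 (by rw [hI, Finset.mem_filter]; exact ⟨Finset.mem_univ _, h⟩)
    have hKs1 : Kseq (n₀ + 1) = gf K₀ := by
      rw [hK₀, hKseq]
      simp only [Function.iterate_succ_apply']
    have hej : e j ≤ m - (gf K₀ : ℤ) := by
      rw [hke j]
      have : (gf K₀ : ℤ) < (k j : ℤ) := by exact_mod_cast hKs1 ▸ hkj
      omega
    have h1 : t ^ (e j) ≤ t ^ (m - (gf K₀ : ℤ)) := zpow_le_zpow_right₀ (le_of_lt ht) hej
    rw [hzabs j, hεabs j, one_mul]
    calc |((b j : L) : ℝ)| * t ^ (e j) ≤ C * t ^ (m - (gf K₀ : ℤ)) := by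
          apply mul_le_mul (hCb j) h1 (le_of_lt (zpow_pos ht0 _)) (le_of_lt hC0)
      _ = C * (t ^ m * t ^ (-(gf K₀ : ℤ))) := by
          rw [sub_eq_add_neg, zpow_add₀ (ne_of_gt ht0)]
  have htail : |((∑ j ∈ J, z j : L) : ℝ)| < δf K₀ / 2 * t ^ m := by
    have h1 : |((∑ j ∈ J, z j : L) : ℝ)| ≤ ∑ j ∈ J, |((z j : L) : ℝ)| := by
      rw [AddSubmonoidClass.coe_finset_sum]
      push_cast
      exact Finset.abs_sum_le_sum_abs _ _
    have h2 : ∑ j ∈ J, |((z j : L) : ℝ)| ≤ J.card • (C * (t ^ m * t ^ (-(gf K₀ : ℤ)))) :=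
      Finset.sum_le_card_nsmul _ _ _ hJbound
    have h3 : (J.card : ℝ) ≤ q := by
      have := Finset.card_le_univ J
      have h4 : J.card ≤ q := by simpa [hqdef] using this
      exact_mod_cast h4
    have hpos : (0:ℝ) < C * (t ^ m * t ^ (-(gf K₀ : ℤ))) := by positivity
    have h5 : (J.card : ℝ) * (C * (t ^ m * t ^ (-(gf K₀ : ℤ))))
        ≤ q * (C * (t ^ m * t ^ (-(gf K₀ : ℤ)))) :=
      mul_le_mul_of_nonneg_right h3 (le_of_lt hpos)
    have h6 : (q : ℝ) * (C * (t ^ m * t ^ (-(gf K₀ : ℤ))))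
        = ((q * C) * t ^ (-(gf K₀ : ℤ))) * t ^ m := by ring
    have h7 : ((q * C : ℝ) * t ^ (-(gf K₀ : ℤ))) * t ^ m < (δf K₀ / 2) * t ^ m :=
      mul_lt_mul_of_pos_right (hgf2 K₀) (zpow_pos ht0 m)
    calc |((∑ j ∈ J, z j : L) : ℝ)| ≤ (J.card : ℝ) * (C * (t ^ m * t ^ (-(gf K₀ : ℤ)))) := by
          rw [← nsmul_eq_mul]; exact le_trans h1 h2
      _ ≤ (q : ℝ) * (C * (t ^ m * t ^ (-(gf K₀ : ℤ)))) := h5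
      _ = ((q * C : ℝ) * t ^ (-(gf K₀ : ℤ))) * t ^ m := h6
      _ < (δf K₀ / 2) * t ^ m := h7
  have htotal : δstar / 2 * t ^ m ≤ |((∑ j, z j : L) : ℝ)| := by
    have hcoe : ((∑ j, z j : L) : ℝ)
        = ((∑ j ∈ I n₀, z j : L) : ℝ) + ((∑ j ∈ J, z j : L) : ℝ) := by
      rw [hsplit]
      push_cast
      ring
    have h1 : |((∑ j ∈ I n₀, z j : L) : ℝ)| - |((∑ j ∈ J, z j : L) : ℝ)|
        ≤ |((∑ j, z j : L) : ℝ)| := by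
      rw [hcoe]
      set X₁ := ((∑ j ∈ I n₀, z j : L) : ℝ)
      set X₂ := ((∑ j ∈ J, z j : L) : ℝ)
      have h0 : |X₁| ≤ |X₁ + X₂| + |X₂| := by
        calc |X₁| = |(X₁ + X₂) + (-X₂)| := by ring_nf
          _ ≤ |X₁ + X₂| + |(-X₂)| := abs_add_le _ _
          _ = |X₁ + X₂| + |X₂| := by rw [abs_neg]
      linarith
    have h2 : δf K₀ / 2 * t ^ m
        ≤ |((∑ j ∈ I n₀, z j : L) : ℝ)| - |((∑ j ∈ J, z j : L) : ℝ)| := by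
      rw [hS₁abs]
      have := mul_le_mul_of_nonneg_left hvlb (le_of_lt (zpow_pos ht0 m) : (0:ℝ) ≤ t ^ m)
      nlinarith [htail, zpow_pos ht0 m]
    have h3 : δstar / 2 * t ^ m ≤ δf K₀ / 2 * t ^ m := by
      apply mul_le_mul_of_nonneg_right (by linarith) (le_of_lt (zpow_pos ht0 m))
    linarith
  have hfinal : t ^ (e j₀) ≤ t ^ m := zpow_le_zpow_right₀ (le_of_lt ht) (hem j₀)
  have hδ2 : (0:ℝ) < δstar / 2 := by linarith
  calc t ^ (e j₀) ≤ t ^ m := hfinal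
    _ ≤ (δstar / 2)⁻¹ * |((∑ j, z j : L) : ℝ)| := by
        rw [le_inv_mul_iff₀ hδ2]
        exact htotal

lemma exists_classify (L : IntermediateField ℚ ℝ) (η : (𝓞 L)ˣ) (hη : 1 < emb L η)
    (hfund : ∀ ε : (𝓞 L)ˣ, 1 < emb L ε → emb L η ≤ emb L ε) (u : (𝓞 L)ˣ) :
    ∃ p : Bool × ℤ,
      ((u : 𝓞 L) : L) = (if p.1 then 1 else -1) * ((η : 𝓞 L) : L) ^ p.2 := by
  classical
  set θ : L := ((η : 𝓞 L) : L) with hθ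
  set t : ℝ := (θ : ℝ) with htdef
  have ht : 1 < t := hη
  have ht0 : 0 < t := lt_trans one_pos ht
  set uL : L := ((u : 𝓞 L) : L) with huL
  set a : ℝ := (uL : ℝ) with hadef
  have huL0 : uL ≠ 0 := NumberField.Units.coe_ne_zero u
  have ha0 : a ≠ 0 := by
    simpa [hadef] using (fun h => huL0 (by exact_mod_cast h : uL = 0))
  have habs : 0 < |a| := abs_pos.mpr ha0
  set n : ℤ := ⌊Real.logb t |a|⌋ with hn
  have hrw : ∀ m : ℤ, t ^ m = t ^ (m : ℝ) := fun m => (Real.rpow_intCast t m).symm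
  have hlow : t ^ n ≤ |a| := by
    rw [hrw]
    calc t ^ (n : ℝ) ≤ t ^ Real.logb t |a| :=
          (Real.rpow_le_rpow_left_iff ht).mpr (Int.floor_le _)
      _ = |a| := Real.rpow_logb ht0 (ne_of_gt ht) habs
  have hhigh : |a| < t ^ (n + 1) := by
    rw [hrw]
    calc |a| = t ^ Real.logb t |a| := (Real.rpow_logb ht0 (ne_of_gt ht) habs).symm
      _ < t ^ ((n + 1 : ℤ) : ℝ) := by
          apply (Real.rpow_lt_rpow_left_iff ht).mpr
          push_cast
          exact Int.lt_floor_add_one _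
  -- the normalized unit
  set w : (𝓞 L)ˣ := u * η ^ (-n) with hw
  have hwL : ((w : 𝓞 L) : L) = uL * θ ^ (-n) := by
    rw [NumberField.Units.coe_coe, Units.coe_mul]
    rw [show ((η ^ (-n) : (𝓞 L)ˣ) : L) = θ ^ (-n) from NumberField.Units.coe_zpow η (-n)]
  have hwR : (((w : 𝓞 L) : L) : ℝ) = a * t ^ (-n) := by
    rw [hwL]
    push_cast
    rw [coe_zpow']
  have hwabs : |(((w : 𝓞 L) : L) : ℝ)| = |a| * t ^ (-n) := by
    rw [hwR, abs_mul, abs_of_pos (zpow_pos ht0 _)]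
  have h1le : 1 ≤ |(((w : 𝓞 L) : L) : ℝ)| := by
    rw [hwabs]
    calc (1:ℝ) = t ^ n * t ^ (-n) := by rw [← zpow_add₀ (ne_of_gt ht0)]; simp
      _ ≤ |a| * t ^ (-n) := mul_le_mul_of_nonneg_right hlow (le_of_lt (zpow_pos ht0 _))
  have hlt : |(((w : 𝓞 L) : L) : ℝ)| < t := by
    rw [hwabs]
    calc |a| * t ^ (-n) < t ^ (n+1) * t ^ (-n) :=
          mul_lt_mul_of_pos_right hhigh (zpow_pos ht0 _)
      _ = t := by rw [← zpow_add₀ (ne_of_gt ht0)]; norm_num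
  rcases eq_or_lt_of_le h1le with heq | hgt
  · -- |w| = 1, so w = ±1
    have hθ0 : θ ≠ 0 := NumberField.Units.coe_ne_zero η
    rcases (abs_eq (by norm_num : (0:ℝ) ≤ 1)).mp heq.symm with h | h
    · refine ⟨(true, n), ?_⟩
      have hwl : ((w : 𝓞 L) : L) = 1 := by exact_mod_cast h
      rw [hwL] at hwl
      have : uL = θ ^ n := by
        have h2 : uL * θ ^ (-n) * θ ^ n = 1 * θ ^ n := by rw [hwl]
        rw [mul_assoc, ← zpow_add₀ hθ0] at h2
        simpa using h2
      simpa using this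
    · refine ⟨(false, n), ?_⟩
      have hwl : ((w : 𝓞 L) : L) = -1 := by exact_mod_cast h
      rw [hwL] at hwl
      have : uL = -θ ^ n := by
        have h2 : uL * θ ^ (-n) * θ ^ n = -1 * θ ^ n := by rw [hwl]
        rw [mul_assoc, ← zpow_add₀ hθ0] at h2
        simpa using h2
      simpa using this
  · -- 1 < |w|: contradiction with fundamentality
    exfalso
    have hw0 : (((w : 𝓞 L) : L) : ℝ) ≠ 0 := by
      intro h
      rw [h] at hgt
      norm_num at hgt
    rcases lt_or_gt_of_ne hw0 with hneg | hpos
    · have habs' : |(((w : 𝓞 L) : L) : ℝ)| = -(((w : 𝓞 L) : L) : ℝ) := abs_of_neg hneg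
      have hnegval : emb L ((-w : (𝓞 L)ˣ) : 𝓞 L) = -(((w : 𝓞 L) : L) : ℝ) := by
        show ((((-w : (𝓞 L)ˣ) : 𝓞 L) : L) : ℝ) = _
        rw [Units.val_neg]
        push_cast
        ring
      have h1 : 1 < emb L ((-w : (𝓞 L)ˣ) : 𝓞 L) := by
        rw [hnegval, ← habs']; exact hgt
      have h2 := hfund (-w) h1
      rw [hnegval, ← habs'] at h2
      exact absurd hlt (not_lt.mpr h2)
    · have habs' : |(((w : 𝓞 L) : L) : ℝ)| = (((w : 𝓞 L) : L) : ℝ) := abs_of_pos hpos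
      have h1 : 1 < emb L (w : 𝓞 L) := by
        show (1:ℝ) < (((w : 𝓞 L) : L) : ℝ)
        rw [← habs']; exact hgt
      have h2 := hfund w h1
      have h2' : t ≤ (((w : 𝓞 L) : L) : ℝ) := h2
      rw [← habs'] at h2'
      exact absurd hlt (not_lt.mpr h2')


lemma add_pow_le'' (a b : ℝ) (ha : 0 ≤ a) (hb : 0 ≤ b) (n : ℕ) :
    (a + b) ^ (n + 1) ≤ a ^ (n + 1) + ((n : ℝ) + 1) * b * (a + b) ^ n := by
  induction n with
  | zero => norm_num
  | succ n ih =>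
    have hab : (0:ℝ) ≤ a + b := by linarith
    have h1 : a ^ (n+1) ≤ (a+b) ^ (n+1) := pow_le_pow_left₀ ha (by linarith) _
    calc (a + b) ^ (n + 2) = (a + b) * (a + b) ^ (n + 1) := by ring
      _ ≤ (a + b) * (a ^ (n+1) + ((n:ℝ)+1) * b * (a+b)^n) := by
          apply mul_le_mul_of_nonneg_left ih hab
      _ = a * a^(n+1) + b * a^(n+1) + ((n:ℝ)+1)*b*((a+b)*(a+b)^n) := by ring
      _ ≤ a^(n+2) + b*(a+b)^(n+1) + ((n:ℝ)+1)*b*(a+b)^(n+1) := by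
          have h2 : (a+b)*(a+b)^n = (a+b)^(n+1) := by ring
          rw [h2]
          have h3 : b * a^(n+1) ≤ b * (a+b)^(n+1) := mul_le_mul_of_nonneg_left h1 hb
          have h4 : a ^ (n+2) = a * a^(n+1) := by ring
          linarith
      _ = a^(n+2) + (((n:ℝ)+1)+1)*b*(a+b)^(n+1) := by ring
      _ = a^(n+2) + ((↑(n+1):ℝ)+1)*b*(a+b)^(n+1) := by push_cast; ring
set_option maxHeartbeats 2000000 in
/-- Lemma 9: the upper bound
`T_{L,ℓ}^c(X) ≤ (2 log X / log η)^ℓ + O((log X)^{ℓ-1})`. -/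
theorem trace_sum_count_upper_bound
    (d : ℕ) (hd : 2 ≤ d) (hsf : Squarefree d)
    (L : IntermediateField ℚ ℝ) (hL : L = ℚ⟮(Real.sqrt d)⟯)
    (σ : L ≃ₐ[ℚ] L) (hσ : σ ≠ AlgEquiv.refl)
    (η : (𝓞 L)ˣ) (hη : 1 < emb L η)
    (hfund : ∀ ε : (𝓞 L)ˣ, 1 < emb L ε → emb L η ≤ emb L ε)
    (ℓ : ℕ) (hℓ : 1 ≤ ℓ) (c : Fin ℓ → L) (hc : ∀ i, c i ≠ 0) :
    ∃ C : ℝ, 0 < C ∧ ∀ X : ℝ, 2 ≤ X →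
      (TraceSumCount L σ ℓ c X : ℝ)
        ≤ (2 * Real.log X / Real.log (emb L η)) ^ ℓ + C * Real.log X ^ (ℓ - 1) := by
  classical
  clear hd hsf hL hσ hc
  set θ : L := ((η : 𝓞 L) : L) with hθdef
  have ht : 1 < ((θ : L) : ℝ) := hη
  set t : ℝ := ((θ : L) : ℝ) with htdef
  have ht0 : 0 < t := lt_trans one_pos ht
  have hlogt : 0 < Real.log t := Real.log_pos ht
  -- σ θ is ± a power of θ
  set uσ : (𝓞 L)ˣ := Units.map (RingOfIntegers.mapRingEquiv σ).toMonoidHom η with huσdef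
  have huσ : ((uσ : 𝓞 L) : L) = σ θ := rfl
  obtain ⟨p₀, hp₀⟩ := exists_classify L η hη hfund uσ
  set ε₀ : L := if p₀.1 then 1 else -1 with hε₀def
  set s : ℤ := p₀.2 with hsdef
  have hσθ : σ θ = ε₀ * θ ^ s := by rw [← huσ, hp₀]
  have hε₀ : ε₀ = 1 ∨ ε₀ = -1 := by
    rw [hε₀def]; by_cases h : p₀.1 <;> simp [h]
  have hε₀z : ∀ r : ℤ, ε₀ ^ r = 1 ∨ ε₀ ^ r = -1 := by
    intro r
    rcases hε₀ with h | h
    · rw [h, one_zpow]; exact Or.inl rfl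
    · rw [h]
      rcases Int.even_or_odd r with hr | hr
      · exact Or.inl (Even.neg_one_zpow hr)
      · exact Or.inr (Odd.neg_one_zpow hr)
  -- cluster lemma setup
  haveI : Nonempty (Fin ℓ) := ⟨⟨0, hℓ⟩⟩
  set b : Fin ℓ ⊕ Fin ℓ → L := Sum.elim c (fun i => σ (c i)) with hbdef
  obtain ⟨δ, hδ0, hδ1, hclust⟩ := cluster L (Fin ℓ ⊕ Fin ℓ) θ ht b
  -- classification of all units
  choose pfn hpfn using exists_classify L η hη hfund
  -- constants
  set B : ℝ := 2 * (Real.log δ⁻¹ / Real.log t + 1) with hBdef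
  have hlogδ : 0 ≤ Real.log δ⁻¹ := by
    rw [Real.log_inv]
    have := Real.log_nonpos (le_of_lt hδ0) hδ1
    linarith
  have hB2 : 2 ≤ B := by
    rw [hBdef]
    have : 0 ≤ Real.log δ⁻¹ / Real.log t := div_nonneg hlogδ (le_of_lt hlogt)
    linarith
  have hBnn : 0 ≤ B := by linarith
  set a₀ : ℝ := 2 * Real.log 2 / Real.log t with ha₀def
  have ha₀ : 0 < a₀ := div_pos (mul_pos two_pos (Real.log_pos one_lt_two)) hlogt
  set C : ℝ := ℓ * B * (1 + B / a₀) ^ (ℓ - 1) * (2 / Real.log t) ^ (ℓ - 1) + 1 with hCdef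
  have hℓ0 : (0:ℝ) < ℓ := by exact_mod_cast hℓ
  have hC0 : 0 < C := by
    rw [hCdef]
    have h1 : (0:ℝ) ≤ (1 + B / a₀) ^ (ℓ - 1) :=
      pow_nonneg (by positivity) _
    have h2 : (0:ℝ) ≤ (2 / Real.log t) ^ (ℓ - 1) := pow_nonneg (by positivity) _
    have h3 := mul_nonneg (mul_nonneg (mul_nonneg (le_of_lt hℓ0) hBnn) h1) h2
    linarith
  refine ⟨C, hC0, ?_⟩
  intro X hX
  have hX0 : 0 < X := by linarith
  have hlogX : 0 < Real.log X := Real.log_pos (by linarith)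
  have hXδ : 2 ≤ X / δ := by
    rw [le_div_iff₀ hδ0]
    nlinarith
  set N : ℕ := ⌊Real.logb t (X / δ)⌋₊ with hNdef
  set S : Set (Fin ℓ → (𝓞 L)ˣ) := {u : Fin ℓ → (𝓞 L)ˣ |
    |((∑ i, (c i * ((u i : 𝓞 L) : L) + σ (c i * ((u i : 𝓞 L) : L))) : L) : ℝ)| ≤ X ∧
    NoVanishingSubsum (Sum.elim (fun i : Fin ℓ => c i * ((u i : 𝓞 L) : L))
      (fun i : Fin ℓ => σ (c i * ((u i : 𝓞 L) : L)))) ∧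
    ∀ i, 1 ≤ |(((u i : 𝓞 L) : L) : ℝ)|} with hSdef
  have hTS : TraceSumCount L σ ℓ c X = S.ncard := rfl
  -- key per-coordinate bounds
  have hkey : ∀ u ∈ S, ∀ i : Fin ℓ,
      0 ≤ (pfn (u i)).2 ∧ ((pfn (u i)).2 : ℝ) ≤ Real.logb t (X / δ) := by
    intro u hu
    obtain ⟨hsum, hnvs, habs1⟩ := hu
    set n : Fin ℓ → ℤ := fun i => (pfn (u i)).2 with hndef
    set sg : Fin ℓ → L := fun i => if (pfn (u i)).1 then 1 else -1 with hsgdef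
    have hsg : ∀ i, sg i = 1 ∨ sg i = -1 := by
      intro i
      rw [hsgdef]
      by_cases h : (pfn (u i)).1 <;> simp [h]
    have hui : ∀ i, ((u i : 𝓞 L) : L) = sg i * θ ^ (n i) := fun i => hpfn (u i)
    set ε : Fin ℓ ⊕ Fin ℓ → L := Sum.elim sg (fun i => sg i * ε₀ ^ (n i)) with hεdef
    set e : Fin ℓ ⊕ Fin ℓ → ℤ := Sum.elim n (fun i => s * n i) with hedef
    have hεpm : ∀ j, ε j = 1 ∨ ε j = -1 := by
      intro j
      cases j with
      | inl i => exact hsg i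
      | inr i =>
        simp only [hεdef, Sum.elim_inr]
        rcases hsg i with h1 | h1 <;> rcases hε₀z (n i) with h2 | h2 <;>
          rw [h1, h2] <;> norm_num
    have hσsg : ∀ i, σ (sg i) = sg i := by
      intro i
      rcases hsg i with h | h <;> rw [h] <;> simp
    have hθ0' : θ ≠ 0 := by
      intro h
      rw [htdef, h] at ht0
      norm_num at ht0
    have hfam : (fun j => ε j * b j * θ ^ (e j))
        = Sum.elim (fun i : Fin ℓ => c i * ((u i : 𝓞 L) : L))
            (fun i : Fin ℓ => σ (c i * ((u i : 𝓞 L) : L))) := by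
      funext j
      cases j with
      | inl i =>
        simp only [hεdef, hedef, hbdef, Sum.elim_inl]
        rw [hui i]
        ring
      | inr i =>
        simp only [hεdef, hedef, hbdef, Sum.elim_inr]
        rw [hui i, map_mul, map_mul, map_zpow₀, hσsg i, hσθ, mul_zpow, ← zpow_mul]
        ring
    have hNVS' : NoVanishingSubsum (fun j => ε j * b j * θ ^ (e j)) := by
      rw [hfam]; exact hnvs
    have hsums : (∑ j, ε j * b j * θ ^ (e j))
        = ∑ i, (c i * ((u i : 𝓞 L) : L) + σ (c i * ((u i : 𝓞 L) : L))) := by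
      rw [hfam, Fintype.sum_sum_type, ← Finset.sum_add_distrib]
      simp
    intro i
    have h1 := hclust ε hεpm e hNVS' (Sum.inl i)
    rw [hsums] at h1
    have h2 : t ^ (n i) ≤ δ⁻¹ * X := by
      refine le_trans ?_ (mul_le_mul_of_nonneg_left hsum (le_of_lt (inv_pos.mpr hδ0)))
      simpa only [hedef, Sum.elim_inl] using h1
    have h3 : δ⁻¹ * X = X / δ := by rw [div_eq_mul_inv]; ring
    rw [h3] at h2
    -- lower bound on n i
    have hsgabs : |((sg i : L) : ℝ)| = 1 := by
      rcases hsg i with h | h <;> rw [h] <;> push_cast <;> simp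
    have h4 : |(((u i : 𝓞 L) : L) : ℝ)| = t ^ (n i) := by
      rw [hui i]
      push_cast
      rw [coe_zpow', abs_mul, abs_of_pos (zpow_pos ht0 _), hsgabs, one_mul]
    have h5 : (1:ℝ) ≤ t ^ (n i) := by rw [← h4]; exact habs1 i
    have h6 : 0 ≤ n i := by
      have := (zpow_le_zpow_iff_right₀ ht).mp (by simpa using h5 : t ^ (0:ℤ) ≤ t ^ (n i))
      exact this
    refine ⟨h6, ?_⟩
    -- upper bound via log
    have h7 : Real.log (t ^ (n i)) ≤ Real.log (X / δ) :=
      Real.log_le_log (zpow_pos ht0 _) h2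
    rw [Real.log_zpow] at h7
    rw [Real.logb]
    rw [le_div_iff₀ hlogt]
    exact h7
  -- injection into a finite type
  set F : (Fin ℓ → (𝓞 L)ˣ) → (Fin ℓ → Bool × Fin (N+1)) := fun u i =>
    ((pfn (u i)).1, ⟨min (pfn (u i)).2.toNat N, by omega⟩) with hFdef
  have htoNat : ∀ u ∈ S, ∀ i : Fin ℓ, (pfn (u i)).2.toNat ≤ N := by
    intro u hu i
    obtain ⟨h6, h7⟩ := hkey u hu i
    apply Nat.le_floor
    have h8 : (((pfn (u i)).2.toNat : ℕ) : ℝ) = ((pfn (u i)).2 : ℝ) := by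
      exact_mod_cast congrArg (Int.cast : ℤ → ℝ) (Int.toNat_of_nonneg h6)
    rw [h8]
    exact h7
  have hinj : Set.InjOn F S := by
    intro u hu u' hu' hEq
    funext i
    have h1 : F u i = F u' i := congrFun hEq i
    simp only [hFdef, Prod.mk.injEq, Fin.mk.injEq] at h1
    obtain ⟨hb1, hb2⟩ := h1
    rw [min_eq_left (htoNat u hu i), min_eq_left (htoNat u' hu' i)] at hb2
    have hn2 : (pfn (u i)).2 = (pfn (u' i)).2 := by
      have h6 := (hkey u hu i).1
      have h6' := (hkey u' hu' i).1
      omega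
    have hLval : ((u i : 𝓞 L) : L) = ((u' i : 𝓞 L) : L) := by
      rw [hpfn (u i), hpfn (u' i), hb1, hn2]
    have : (u i : 𝓞 L) = (u' i : 𝓞 L) := by
      apply NumberField.RingOfIntegers.coe_injective
      rw [← NumberField.RingOfIntegers.coe_eq_algebraMap, ← NumberField.RingOfIntegers.coe_eq_algebraMap]
      exact hLval
    exact Units.ext this
  have hcount : S.ncard ≤ (2 * (N + 1)) ^ ℓ := by
    calc S.ncard ≤ (Set.univ : Set (Fin ℓ → Bool × Fin (N+1))).ncard :=
          Set.ncard_le_ncard_of_injOn F (fun a _ => Set.mem_univ _) hinj Set.finite_univ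
      _ = (2 * (N + 1)) ^ ℓ := by
          rw [Set.ncard_univ, Nat.card_eq_fintype_card]
          simp
  -- final numeric estimate
  rw [hTS, show emb L ↑η = t from rfl]
  set a : ℝ := 2 * Real.log X / Real.log t with hadef
  have haa₀ : a₀ ≤ a := by
    have hlog2X : Real.log 2 ≤ Real.log X := Real.log_le_log (by norm_num) hX
    have h := mul_le_mul_of_nonneg_left hlog2X (by norm_num : (0:ℝ) ≤ 2)
    rw [hadef, ha₀def, div_eq_mul_inv, div_eq_mul_inv]
    exact mul_le_mul_of_nonneg_right h (inv_nonneg.mpr (le_of_lt hlogt))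
  have ha0 : 0 < a := lt_of_lt_of_le ha₀ haa₀
  have hNle : (N : ℝ) ≤ Real.logb t (X / δ) := by
    apply Nat.floor_le
    rw [Real.logb, le_div_iff₀ hlogt]
    have : (0:ℝ) < X / δ := by linarith
    have h8 : (1:ℝ) ≤ X / δ := by linarith
    have := Real.log_nonneg h8
    nlinarith [Real.log_nonneg h8]
  have h2N : (2 * ((N:ℝ) + 1)) ≤ a + B := by
    have hlogdiv : Real.logb t (X / δ) = (Real.log X + Real.log δ⁻¹) / Real.log t := by
      rw [Real.logb, div_eq_mul_inv X δ, Real.log_mul (ne_of_gt hX0) (ne_of_gt (inv_pos.mpr hδ0))]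
    rw [hadef, hBdef]
    rw [hlogdiv] at hNle
    have expand : 2 * Real.log X / Real.log t + 2 * (Real.log δ⁻¹ / Real.log t + 1)
        = 2 * ((Real.log X + Real.log δ⁻¹) / Real.log t + 1) := by
      field_simp
      ring
    rw [expand]
    linarith
  have hcastN : ((2 * (N + 1) : ℕ) : ℝ) = 2 * ((N:ℝ) + 1) := by push_cast; ring
  have hpow1 : ((2 * (N + 1) : ℕ) : ℝ) ^ ℓ ≤ (a + B) ^ ℓ := by
    rw [hcastN]
    apply pow_le_pow_left₀ (by positivity) h2N
  have hsub : ℓ - 1 + 1 = ℓ := Nat.succ_pred_eq_of_pos hℓ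
  have hpow2 : (a + B) ^ ℓ ≤ a ^ ℓ + ℓ * B * (a + B) ^ (ℓ - 1) := by
    have h9 := add_pow_le'' a B (le_of_lt ha0) hBnn (ℓ - 1)
    rw [hsub] at h9
    have hcast : ((ℓ - 1 : ℕ) : ℝ) + 1 = ℓ := by
      have : ((ℓ - 1 + 1 : ℕ) : ℝ) = ℓ := by rw [hsub]
      push_cast at this
      linarith
    rw [hcast] at h9
    exact h9
  have hptw : a + B ≤ (1 + B / a₀) * a := by
    have h10 : B * a₀ ≤ B * a := mul_le_mul_of_nonneg_left haa₀ hBnn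
    have h11 : B ≤ B / a₀ * a := by
      rw [div_mul_eq_mul_div, le_div_iff₀ ha₀]
      linarith
    have hexpand : (1 + B / a₀) * a = a + B / a₀ * a := by ring
    rw [hexpand]
    linarith
  have hpow3 : ℓ * B * (a + B) ^ (ℓ - 1) ≤ ℓ * B * ((1 + B / a₀) * a) ^ (ℓ - 1) := by
    apply mul_le_mul_of_nonneg_left
    · exact pow_le_pow_left₀ (by positivity) hptw _
    · positivity
  have hexp : ((1 + B / a₀) * a) ^ (ℓ - 1)
      = (1 + B / a₀) ^ (ℓ - 1) * ((2 / Real.log t) ^ (ℓ - 1) * Real.log X ^ (ℓ - 1)) := by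
    rw [mul_pow, show a = (2 / Real.log t) * Real.log X from by rw [hadef]; ring, mul_pow]
  have hfin : ℓ * B * ((1 + B / a₀) * a) ^ (ℓ - 1) ≤ C * Real.log X ^ (ℓ - 1) := by
    rw [hexp, hCdef]
    have hpos : (0:ℝ) ≤ Real.log X ^ (ℓ - 1) := pow_nonneg (le_of_lt hlogX) _
    nlinarith [hpos]
  calc (S.ncard : ℝ) ≤ ((2 * (N + 1)) ^ ℓ : ℕ) := by exact_mod_cast hcount
    _ = ((2 * (N + 1) : ℕ) : ℝ) ^ ℓ := by push_cast; ring
    _ ≤ (a + B) ^ ℓ := hpow1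
    _ ≤ a ^ ℓ + ℓ * B * (a + B) ^ (ℓ - 1) := hpow2
    _ ≤ a ^ ℓ + ℓ * B * ((1 + B / a₀) * a) ^ (ℓ - 1) := by linarith [hpow3]
    _ ≤ a ^ ℓ + C * Real.log X ^ (ℓ - 1) := by linarith [hfin]
end
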